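/- arXiv:2406.16234 — 5 statements merged into one kernel-verified Lean document; each statement's English description precedes it below -/
import Mathlib

section
/- Under the longitudinal difference-in-differences assumptions, the intervention-specific mean is identified by the iterated-regression functional ψ_t. Precisely: fix an integer t ≥ 1 and adopt the core setup with horizon t (events B₀ ⊇ ⋯ ⊇ B_t, σ-algebras 𝒲₁ ⊆ ⋯ ⊆ 𝒲_t, positivity p_m ≥ ε a.s.). Let Y₀, Y₁, …, Y_t and Y₀*, Y₁*, …, Y_t* be integrable random variables such that for every s ∈ {0,…,t}, Y_s* = Y_s a.s. on the event B_s (treatment-consistency/no-anticipation; since P(B₀)=1 this gives Y₀* = Y₀ a.s.). Assume parallel trends: for every pair 1 ≤ m ≤ k ≤ t there exists a 𝒲_m-measurable random variable h_{k,m} that is simultaneously a version of the conditional expectation of Y_k* − Y_{k−1}* given 𝒲_m under P(·|B_{m−1}) and a version of the conditional expectation of Y_k* − Y_{k−1}* given 𝒲_m under P(·|B_m). Then E_P[Y_t*] = E_P[Y₀] + Σ_{k=1}^t (φ_{k,k} − φ_{k−1,k}) =: ψ_t, where φ_{j,k} is built from the observed outcome Y_j by the iterated conditional-expectation recursion, and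 this value does not depend on the versions of conditional expectations chosen. -/
/-!
For each `k`, the difference `D m = Q^{k,k,m} - Q^{k-1,k,m}` of the two iterated regressions is
again an iterated regression, started from `Y_k - Y_{k-1}`, which equals `Y*_k - Y*_{k-1}` on
`B_k`. Going down from `m = k`, the tower property and parallel trends replace the conditional
expectation of `Y*_k - Y*_{k-1}` given `𝒲_m` under `P(·|B_m)` by the one under `P(·|B_{m-1})`,
so `D m` is a version of the latter. At `m = 1` we have `P(·|B_0) = P`, hence
`φ_{k,k} - φ_{k-1,k} = E[Y*_k] - E[Y*_{k-1}]`, and the sum telescopes.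

Positivity is what licenses each downward step: `p_m ≥ ε` gives
`P(S | B_{m-1}) ≤ ε⁻¹ P(S ∩ B_m | B_{m-1})` for `S ∈ 𝒲_m`, so a.e. equalities and integrability
of `𝒲_m`-measurable functions pass from `P(·|B_m)` to `P(·|B_{m-1})`.
-/

open MeasureTheory ProbabilityTheory

section CondTransfer

variable {Ω : Type*} {m m0 : MeasurableSpace Ω} {μ : Measure Ω} [IsFiniteMeasure μ] {C : Set Ω}
  {ε : ℝ}

lemma measure_le_ofReal_inv_mul_measure_inter (hm : m ≤ m0) (hC : MeasurableSet C)
    (hε : 0 < ε) (hpos : ∀ᵐ ω ∂μ, ε ≤ μ[C.indicator (fun _ => (1 : ℝ))|m] ω)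
    {S : Set Ω} (hS : MeasurableSet[m] S) :
    μ S ≤ ENNReal.ofReal ε⁻¹ * μ (S ∩ C) := by
  have hreal : ε * μ.real S ≤ μ.real (S ∩ C) :=
    calc ε * μ.real S = ∫ _ in S, ε ∂μ := by rw [setIntegral_const, smul_eq_mul, mul_comm]
      _ ≤ ∫ ω in S, μ[C.indicator (fun _ => (1 : ℝ))|m] ω ∂μ :=
          setIntegral_mono_ae integrableOn_const integrable_condExp.integrableOn hpos
      _ = ∫ ω in S, C.indicator (fun _ => (1 : ℝ)) ω ∂μ :=
          setIntegral_condExp hm ((integrable_const 1).indicator hC) hS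
      _ = μ.real (S ∩ C) := by
        rw [setIntegral_indicator hC, setIntegral_const, smul_eq_mul, mul_one]
  rw [← ofReal_measureReal, ← ofReal_measureReal, ← ENNReal.ofReal_mul (by positivity)]
  refine ENNReal.ofReal_le_ofReal ?_
  rwa [le_inv_mul_iff₀ hε]

lemma trim_le_smul_trim_cond (hm : m ≤ m0) (hC : MeasurableSet C) (hε : 0 < ε)
    (hpos : ∀ᵐ ω ∂μ, ε ≤ μ[C.indicator (fun _ => (1 : ℝ))|m] ω) :
    μ.trim hm ≤ (ENNReal.ofReal ε⁻¹ * μ C) • (μ[|C]).trim hm := by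
  refine Measure.le_intro fun S hS _ => ?_
  rw [trim_measurableSet_eq hm hS, Measure.smul_apply, trim_measurableSet_eq hm hS, smul_eq_mul,
    mul_assoc, mul_comm (μ C), cond_mul_eq_inter hC, Set.inter_comm]
  exact measure_le_ofReal_inv_mul_measure_inter hm hC hε hpos hS

lemma ae_eq_of_ae_eq_cond {β : Type*} [TopologicalSpace β] [TopologicalSpace.MetrizableSpace β]
    (hm : m ≤ m0) (hC : MeasurableSet C) (hε : 0 < ε)
    (hpos : ∀ᵐ ω ∂μ, ε ≤ μ[C.indicator (fun _ => (1 : ℝ))|m] ω)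
    {f g : Ω → β} (hf : StronglyMeasurable[m] f) (hg : StronglyMeasurable[m] g)
    (hfg : f =ᵐ[μ[|C]] g) : f =ᵐ[μ] g :=
  ae_eq_of_ae_eq_trim <| (Measure.absolutelyContinuous_of_le_smul
    (trim_le_smul_trim_cond hm hC hε hpos)).ae_eq (hf.ae_eq_trim_of_stronglyMeasurable hm hg hfg)

lemma integrable_of_integrable_cond {E : Type*} [NormedAddCommGroup E]
    (hm : m ≤ m0) (hC : MeasurableSet C) (hε : 0 < ε)
    (hpos : ∀ᵐ ω ∂μ, ε ≤ μ[C.indicator (fun _ => (1 : ℝ))|m] ω)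
    {g : Ω → E} (hg : StronglyMeasurable[m] g) (hgi : Integrable g μ[|C]) : Integrable g μ :=
  integrable_of_integrable_trim hm <|
    ((hgi.trim hm hg).smul_measure (by finiteness)).mono_measure
      (trim_le_smul_trim_cond hm hC hε hpos)

end CondTransfer

section CondMeasure

variable {Ω : Type*} [MeasurableSpace Ω] {μ : Measure Ω} {s t : Set Ω}

lemma cond_cond_of_subset [IsFiniteMeasure μ] (hs : MeasurableSet s) (ht : MeasurableSet t)
    (hts : t ⊆ s) : μ[|s][|t] = μ[|t] := by
  rw [cond_cond_eq_cond_inter hs ht, Set.inter_eq_right.2 hts]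

lemma cond_eq_self_of_measure_eq_one [IsProbabilityMeasure μ] (hs : MeasurableSet s)
    (hμs : μ s = 1) : μ[|s] = μ := by
  rw [ProbabilityTheory.cond, hμs, inv_one, one_smul,
    Measure.restrict_eq_self_of_ae_mem ((mem_ae_iff_prob_eq_one hs).2 hμs)]

lemma ae_cond_of_ae_mem_imp (hs : MeasurableSet s) {p : Ω → Prop} (h : ∀ᵐ ω ∂μ, ω ∈ s → p ω) :
    ∀ᵐ ω ∂μ[|s], p ω := by
  filter_upwards [cond_absolutelyContinuous.ae_le h, ae_cond_mem hs] with ω hp hω using hp hω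

lemma MeasureTheory.Integrable.cond {E : Type*} [NormedAddCommGroup E] {f : Ω → E}
    (hf : Integrable f μ) (s : Set Ω) : Integrable f μ[|s] := by
  rcases eq_or_ne (μ s) 0 with hμs | hμs
  · rw [cond_eq_zero_of_meas_eq_zero hμs]
    exact integrable_zero_measure
  · exact hf.restrict.smul_measure (ENNReal.inv_ne_top.2 hμs)

end CondMeasure

lemma Finset.sum_Icc_one_sub_pred {G : Type*} [AddCommGroup G] (f : ℕ → G) (n : ℕ) :
    ∑ k ∈ Finset.Icc 1 n, (f k - f (k - 1)) = f n - f 0 := by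
  induction n with
  | zero => simp
  | succ n ih => rw [Finset.sum_Icc_succ_top (by omega), ih, Nat.add_sub_cancel]; abel

section IteratedRegression

variable {Ω : Type*} [m0 : MeasurableSpace Ω] {P : Measure Ω} {B : ℕ → Set Ω}
  {𝒲 : ℕ → MeasurableSpace Ω} {k t : ℕ} {ε : ℝ}

structure NestedPositivity (P : Measure Ω) (B : ℕ → Set Ω) (𝒲 : ℕ → MeasurableSpace Ω) (k : ℕ)
    (ε : ℝ) : Prop where
  measurableSet : ∀ m ≤ k, MeasurableSet (B m)
  subset : ∀ m, 1 ≤ m → m ≤ k → B m ⊆ B (m - 1)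
  le : ∀ m, 1 ≤ m → m ≤ k → 𝒲 m ≤ m0
  pos : 0 < ε
  ae_le_condExp : ∀ m, 1 ≤ m → m ≤ k →
    ∀ᵐ ω ∂P[|B (m - 1)], ε ≤ (P[|B (m - 1)])[(B m).indicator (fun _ => (1 : ℝ))|𝒲 m] ω

namespace NestedPositivity

lemma mono (h : NestedPositivity P B 𝒲 t ε) (hkt : k ≤ t) : NestedPositivity P B 𝒲 k ε where
  measurableSet m hm := h.measurableSet m (hm.trans hkt)
  subset m hm1 hmk := h.subset m hm1 (hmk.trans hkt)
  le m hm1 hmk := h.le m hm1 (hmk.trans hkt)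
  pos := h.pos
  ae_le_condExp m hm1 hmk := h.ae_le_condExp m hm1 (hmk.trans hkt)

variable {m : ℕ}

lemma cond_cond [IsFiniteMeasure P] (h : NestedPositivity P B 𝒲 k ε) (hm1 : 1 ≤ m)
    (hmk : m ≤ k) :
    P[|B (m - 1)][|B m] = P[|B m] :=
  cond_cond_of_subset (h.measurableSet _ (by omega)) (h.measurableSet m hmk) (h.subset m hm1 hmk)

lemma ae_eq_of_ae_eq_cond [IsFiniteMeasure P] (h : NestedPositivity P B 𝒲 k ε) (hm1 : 1 ≤ m)
    (hmk : m ≤ k) {f g : Ω → ℝ} (hf : StronglyMeasurable[𝒲 m] f)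
    (hg : StronglyMeasurable[𝒲 m] g)
    (hfg : f =ᵐ[P[|B m]] g) : f =ᵐ[P[|B (m - 1)]] g :=
  _root_.ae_eq_of_ae_eq_cond (h.le m hm1 hmk) (h.measurableSet m hmk) h.pos
    (h.ae_le_condExp m hm1 hmk) hf hg (by rwa [h.cond_cond hm1 hmk])

lemma integrable_of_integrable_cond [IsFiniteMeasure P] (h : NestedPositivity P B 𝒲 k ε)
    (hm1 : 1 ≤ m) (hmk : m ≤ k) {g : Ω → ℝ} (hg : StronglyMeasurable[𝒲 m] g)
    (hgi : Integrable g P[|B m]) :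
    Integrable g P[|B (m - 1)] :=
  _root_.integrable_of_integrable_cond (h.le m hm1 hmk) (h.measurableSet m hmk) h.pos
    (h.ae_le_condExp m hm1 hmk) hg (by rwa [h.cond_cond hm1 hmk])

lemma of_condExp_version [IsFiniteMeasure P] (hB : ∀ m ≤ k, MeasurableSet (B m))
    (hBanti : ∀ m < k, B (m + 1) ⊆ B m) (h𝒲 : ∀ m, 1 ≤ m → m ≤ k → 𝒲 m ≤ m0) (hε : 0 < ε)
    {p : ℕ → Ω → ℝ} (hp : ∀ m, 1 ≤ m → m ≤ k →
      p m =ᵐ[P[|B (m - 1)]] (P[|B (m - 1)])[(B m).indicator (fun _ => (1 : ℝ))|𝒲 m])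
    (hpε : ∀ m, 1 ≤ m → m ≤ k → ∀ᵐ ω ∂P, ε ≤ p m ω) : NestedPositivity P B 𝒲 k ε where
  measurableSet := hB
  subset m hm1 hmk := by simpa [Nat.sub_add_cancel hm1] using hBanti (m - 1) (by omega)
  le := h𝒲
  pos := hε
  ae_le_condExp m hm1 hmk := by
    filter_upwards [hp m hm1 hmk, cond_absolutelyContinuous.ae_le (hpε m hm1 hmk)]
      with ω hpω hεω using hpω ▸ hεω

end NestedPositivity

/-- The paper's `m ↦ Q^{j,k,m}` is an iterated regression with `R (k + 1) = Y_j`. -/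
def IsIteratedRegression (P : Measure Ω) (B : ℕ → Set Ω) (𝒲 : ℕ → MeasurableSpace Ω) (k : ℕ)
    (R : ℕ → Ω → ℝ) : Prop :=
  ∀ m, 1 ≤ m → m ≤ k → Measurable[𝒲 m] (R m) ∧ R m =ᵐ[P[|B m]] (P[|B m])[R (m + 1)|𝒲 m]

namespace IsIteratedRegression

variable {R Ra Rb : ℕ → Ω → ℝ}

lemma sub (ha : IsIteratedRegression P B 𝒲 k Ra) (hb : IsIteratedRegression P B 𝒲 k Rb)
    (hia : ∀ m, 1 ≤ m → m ≤ k → Integrable (Ra (m + 1)) P[|B m])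
    (hib : ∀ m, 1 ≤ m → m ≤ k → Integrable (Rb (m + 1)) P[|B m]) :
    IsIteratedRegression P B 𝒲 k (Ra - Rb) := fun m hm1 hmk =>
  ⟨(ha m hm1 hmk).1.sub (hb m hm1 hmk).1,
    ((ha m hm1 hmk).2.sub (hb m hm1 hmk).2).trans
      (condExp_sub (hia m hm1 hmk) (hib m hm1 hmk) _).symm⟩

lemma integrable [IsFiniteMeasure P] (hR : IsIteratedRegression P B 𝒲 k R)
    (h : NestedPositivity P B 𝒲 k ε) {m : ℕ} (hm1 : 1 ≤ m) (hmk : m ≤ k) :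
    Integrable (R m) P[|B (m - 1)] :=
  h.integrable_of_integrable_cond hm1 hmk (hR m hm1 hmk).1.stronglyMeasurable
    (integrable_condExp.congr (hR m hm1 hmk).2.symm)

lemma ae_eq_condExp [IsFiniteMeasure P] (hR : IsIteratedRegression P B 𝒲 k R)
    (h : NestedPositivity P B 𝒲 k ε) (h𝒲 : ∀ m, 1 ≤ m → m < k → 𝒲 m ≤ 𝒲 (m + 1)) {Δ : Ω → ℝ}
    (htop : R (k + 1) =ᵐ[P[|B k]] Δ)
    (hPT : ∀ m, 1 ≤ m → m ≤ k → ∃ g : Ω → ℝ, Measurable[𝒲 m] g ∧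
      g =ᵐ[P[|B (m - 1)]] (P[|B (m - 1)])[Δ|𝒲 m] ∧ g =ᵐ[P[|B m]] (P[|B m])[Δ|𝒲 m])
    {m : ℕ} (hm1 : 1 ≤ m) (hmk : m ≤ k) :
    R m =ᵐ[P[|B (m - 1)]] (P[|B (m - 1)])[Δ|𝒲 m] := by
  have descend : ∀ n, 1 ≤ n → n ≤ k → (P[|B n])[R (n + 1)|𝒲 n] =ᵐ[P[|B n]] (P[|B n])[Δ|𝒲 n] →
      R n =ᵐ[P[|B (n - 1)]] (P[|B (n - 1)])[Δ|𝒲 n] := by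
    intro n hn1 hnk hnext
    obtain ⟨g, hg, hg_pred, hg_cur⟩ := hPT n hn1 hnk
    exact (h.ae_eq_of_ae_eq_cond hn1 hnk (hR n hn1 hnk).1.stronglyMeasurable hg.stronglyMeasurable
      (((hR n hn1 hnk).2.trans hnext).trans hg_cur.symm)).trans hg_pred
  induction hmk using Nat.decreasingInduction with
  | self => exact descend k hm1 le_rfl (condExp_congr_ae htop)
  | of_succ m hmk ih =>
    have hnext := ih (by omega)
    rw [Nat.add_sub_cancel] at hnext
    exact descend m hm1 hmk.le <| (condExp_congr_ae hnext).trans <|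
      condExp_condExp_of_le (h𝒲 m hm1 hmk) (h.le (m + 1) (by omega) hmk)

lemma integral_sub_integral [IsFiniteMeasure P] (ha : IsIteratedRegression P B 𝒲 k Ra)
    (hb : IsIteratedRegression P B 𝒲 k Rb) (h : NestedPositivity P B 𝒲 k ε)
    (h𝒲 : ∀ m, 1 ≤ m → m < k → 𝒲 m ≤ 𝒲 (m + 1)) (hk : 1 ≤ k) (hB0 : P[|B 0] = P)
    (hia : Integrable (Ra (k + 1)) P[|B k]) (hib : Integrable (Rb (k + 1)) P[|B k])
    {Δ : Ω → ℝ} (htop : Ra (k + 1) - Rb (k + 1) =ᵐ[P[|B k]] Δ)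
    (hPT : ∀ m, 1 ≤ m → m ≤ k → ∃ g : Ω → ℝ, Measurable[𝒲 m] g ∧
      g =ᵐ[P[|B (m - 1)]] (P[|B (m - 1)])[Δ|𝒲 m] ∧ g =ᵐ[P[|B m]] (P[|B m])[Δ|𝒲 m]) :
    ∫ ω, Ra 1 ω ∂P - ∫ ω, Rb 1 ω ∂P = ∫ ω, Δ ω ∂P := by
  have hint : ∀ R, IsIteratedRegression P B 𝒲 k R → Integrable (R (k + 1)) P[|B k] →
      ∀ m, 1 ≤ m → m ≤ k → Integrable (R (m + 1)) P[|B m] := by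
    intro R hR htop m hm1 hmk
    rcases hmk.lt_or_eq with hmk | rfl
    · simpa using hR.integrable h (by omega : 1 ≤ m + 1) hmk
    · exact htop
  have hdiff := (ha.sub hb (hint Ra ha hia) (hint Rb hb hib)).ae_eq_condExp h h𝒲 htop hPT le_rfl hk
  have hia1 := ha.integrable h le_rfl hk
  have hib1 := hb.integrable h le_rfl hk
  simp only [Nat.sub_self, hB0] at hdiff hia1 hib1
  calc ∫ ω, Ra 1 ω ∂P - ∫ ω, Rb 1 ω ∂P = ∫ ω, (Ra - Rb) 1 ω ∂P := (integral_sub hia1 hib1).symm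
    _ = ∫ ω, (P[Δ|𝒲 1]) ω ∂P := integral_congr_ae hdiff
    _ = ∫ ω, Δ ω ∂P := integral_condExp (h.le 1 le_rfl hk)

end IsIteratedRegression

end IteratedRegression

theorem intervention_specific_mean_identification_general
    {Ω : Type*} [inst : MeasurableSpace Ω] (P : Measure Ω) [IsProbabilityMeasure P]
    (t : ℕ)
    (B : ℕ → Set Ω)
    (hBmeas : ∀ m, m ≤ t → MeasurableSet (B m))
    (hBmono : ∀ m, m < t → B (m + 1) ⊆ B m)
    (hB0 : P (B 0) = 1)
    (𝒲 : ℕ → MeasurableSpace Ω)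
    (h𝒲le : ∀ m, 1 ≤ m → m ≤ t → 𝒲 m ≤ inst)
    (h𝒲mono : ∀ m, 1 ≤ m → m < t → 𝒲 m ≤ 𝒲 (m + 1))
    (ε : ℝ) (hε : 0 < ε)
    (p : ℕ → Ω → ℝ)
    (hpver : ∀ m, 1 ≤ m → m ≤ t →
      p m =ᵐ[P[|B (m - 1)]] (P[|B (m - 1)])[(B m).indicator (fun _ => (1 : ℝ))|𝒲 m])
    (hppos : ∀ m, 1 ≤ m → m ≤ t → ∀ᵐ ω ∂P, ε ≤ p m ω)
    (Y Ystar : ℕ → Ω → ℝ)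
    (hYint : ∀ s, s ≤ t → Integrable (Y s) P)
    (hYstarint : ∀ s, s ≤ t → Integrable (Ystar s) P)
    (hcons : ∀ s, s ≤ t → ∀ᵐ ω ∂P, ω ∈ B s → Ystar s ω = Y s ω)
    (hPT : ∀ k m, 1 ≤ m → m ≤ k → k ≤ t → ∃ h : Ω → ℝ, Measurable[𝒲 m] h ∧
      h =ᵐ[P[|B (m - 1)]] (P[|B (m - 1)])[fun ω => Ystar k ω - Ystar (k - 1) ω|𝒲 m] ∧
      h =ᵐ[P[|B m]] (P[|B m])[fun ω => Ystar k ω - Ystar (k - 1) ω|𝒲 m])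
    (Q : ℕ → ℕ → ℕ → Ω → ℝ)
    (hQtop : ∀ k, 1 ≤ k → k ≤ t → ∀ j, (j = k - 1 ∨ j = k) → Q j k (k + 1) = Y j)
    (hQmeas : ∀ k, 1 ≤ k → k ≤ t → ∀ j, (j = k - 1 ∨ j = k) →
      ∀ m, 1 ≤ m → m ≤ k → Measurable[𝒲 m] (Q j k m))
    (hQver : ∀ k, 1 ≤ k → k ≤ t → ∀ j, (j = k - 1 ∨ j = k) →
      ∀ m, 1 ≤ m → m ≤ k → Q j k m =ᵐ[P[|B m]] (P[|B m])[Q j k (m + 1)|𝒲 m])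
    :
    ∫ ω, Ystar t ω ∂P
      = (∫ ω, Y 0 ω ∂P)
        + ∑ k ∈ Finset.Icc 1 t, ((∫ ω, Q k k 1 ω ∂P) - ∫ ω, Q (k - 1) k 1 ω ∂P) := by
  have hpos := NestedPositivity.of_condExp_version hBmeas hBmono h𝒲le hε hpver hppos
  have hB0' : P[|B 0] = P := cond_eq_self_of_measure_eq_one (hBmeas 0 (Nat.zero_le t)) hB0
  have hcons_cond : ∀ s r, s ≤ t → r ≤ t → B r ⊆ B s → Ystar s =ᵐ[P[|B r]] Y s :=
    fun s r hst hrt hrs => ae_cond_of_ae_mem_imp (hBmeas r hrt) <| by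
      filter_upwards [hcons s hst] with ω h hω using h (hrs hω)
  have hstep : ∀ k ∈ Finset.Icc 1 t, ∫ ω, Q k k 1 ω ∂P - ∫ ω, Q (k - 1) k 1 ω ∂P
      = ∫ ω, Ystar k ω ∂P - ∫ ω, Ystar (k - 1) ω ∂P := by
    intro k hk
    obtain ⟨hk1, hkt⟩ := Finset.mem_Icc.1 hk
    have hQ : ∀ j, (j = k - 1 ∨ j = k) → IsIteratedRegression P B 𝒲 k (Q j k) :=
      fun j hj m hm1 hmk => ⟨hQmeas k hk1 hkt j hj m hm1 hmk, hQver k hk1 hkt j hj m hm1 hmk⟩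
    rw [← integral_sub (hYstarint k hkt) (hYstarint (k - 1) (by omega))]
    refine (hQ k (.inr rfl)).integral_sub_integral (hQ (k - 1) (.inl rfl)) (hpos.mono hkt)
      (fun m hm1 hmk => h𝒲mono m hm1 (by omega)) hk1 hB0' ?_ ?_ ?_
      (fun m hm1 hmk => hPT k m hm1 hmk hkt)
    · rw [hQtop k hk1 hkt k (.inr rfl)]; exact (hYint k hkt).cond _
    · rw [hQtop k hk1 hkt (k - 1) (.inl rfl)]; exact (hYint (k - 1) (by omega)).cond _
    · rw [hQtop k hk1 hkt k (.inr rfl), hQtop k hk1 hkt (k - 1) (.inl rfl)]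
      exact ((hcons_cond k k hkt hkt le_rfl).sub
        (hcons_cond (k - 1) k (by omega) hkt (hpos.subset k hk1 hkt))).symm
  have hY0 : ∫ ω, Ystar 0 ω ∂P = ∫ ω, Y 0 ω ∂P := by
    rw [← hB0']
    exact integral_congr_ae (hcons_cond 0 0 (by omega) (by omega) le_rfl)
  rw [Finset.sum_congr rfl hstep, Finset.sum_Icc_one_sub_pred, hY0]
  ring

/-- Identification of the intervention-specific mean by the
iterated-regression functional `ψ_t` under longitudinal difference-in-differences
assumptions. Under the core setup with horizon `t`, let `Y s` (observed outcomes) and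
`Ystar s` (potential outcomes under the target regime) be integrable for `s ≤ t`, with
`Ystar s = Y s` a.s. on `B s` (treatment-consistency/no-anticipation; `P (B 0) = 1`
gives `Ystar 0 = Y 0` a.s.). Assume parallel trends: for every `1 ≤ m ≤ k ≤ t` there is
a `𝒲 m`-measurable `h` that is a version of `E[Ystar k - Ystar (k-1) | 𝒲 m]` both
under `P[|B (m-1)]` and under `P[|B m]`. Then for any choice of versions `Q j k m` in
the iterated conditional-expectation recursions built from the observed outcomes,
`E_P[Ystar t] = E_P[Y 0] + Σ_{k=1}^t (φ_{k,k} - φ_{k-1,k}) = ψ_t`,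
with `φ_{j,k} = E_P[Q j k 1]`; in particular the value does not depend on the chosen
versions. -/
theorem intervention_specific_mean_identification
    {Ω : Type*} [inst : MeasurableSpace Ω] (P : Measure Ω) [IsProbabilityMeasure P]
    (t : ℕ) (ht : 1 ≤ t)
    (B : ℕ → Set Ω)
    (hBmeas : ∀ m, m ≤ t → MeasurableSet (B m))
    (hBmono : ∀ m, m < t → B (m + 1) ⊆ B m)
    (hB0 : P (B 0) = 1)
    (hBt : 0 < P (B t))
    (𝒲 : ℕ → MeasurableSpace Ω)
    (h𝒲le : ∀ m, 1 ≤ m → m ≤ t → 𝒲 m ≤ inst)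
    (h𝒲mono : ∀ m, 1 ≤ m → m < t → 𝒲 m ≤ 𝒲 (m + 1))
    (ε : ℝ) (hε : 0 < ε)
    (p : ℕ → Ω → ℝ)
    (hpmeas : ∀ m, 1 ≤ m → m ≤ t → Measurable[𝒲 m] (p m))
    (hpver : ∀ m, 1 ≤ m → m ≤ t →
      p m =ᵐ[P[|B (m - 1)]] (P[|B (m - 1)])[(B m).indicator (fun _ => (1 : ℝ))|𝒲 m])
    (hppos : ∀ m, 1 ≤ m → m ≤ t → ∀ᵐ ω ∂P, ε ≤ p m ω)
    (Y Ystar : ℕ → Ω → ℝ)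
    (hYint : ∀ s, s ≤ t → Integrable (Y s) P)
    (hYstarint : ∀ s, s ≤ t → Integrable (Ystar s) P)
    (hcons : ∀ s, s ≤ t → ∀ᵐ ω ∂P, ω ∈ B s → Ystar s ω = Y s ω)
    (hPT : ∀ k m, 1 ≤ m → m ≤ k → k ≤ t → ∃ h : Ω → ℝ, Measurable[𝒲 m] h ∧
      h =ᵐ[P[|B (m - 1)]] (P[|B (m - 1)])[fun ω => Ystar k ω - Ystar (k - 1) ω|𝒲 m] ∧
      h =ᵐ[P[|B m]] (P[|B m])[fun ω => Ystar k ω - Ystar (k - 1) ω|𝒲 m])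
    (Q : ℕ → ℕ → ℕ → Ω → ℝ)
    (hQtop : ∀ k, 1 ≤ k → k ≤ t → ∀ j, (j = k - 1 ∨ j = k) → Q j k (k + 1) = Y j)
    (hQmeas : ∀ k, 1 ≤ k → k ≤ t → ∀ j, (j = k - 1 ∨ j = k) →
      ∀ m, 1 ≤ m → m ≤ k → Measurable[𝒲 m] (Q j k m))
    (hQver : ∀ k, 1 ≤ k → k ≤ t → ∀ j, (j = k - 1 ∨ j = k) →
      ∀ m, 1 ≤ m → m ≤ k → Q j k m =ᵐ[P[|B m]] (P[|B m])[Q j k (m + 1)|𝒲 m])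
    :
    ∫ ω, Ystar t ω ∂P
      = (∫ ω, Y 0 ω ∂P)
        + ∑ k ∈ Finset.Icc 1 t, ((∫ ω, Q k k 1 ω ∂P) - ∫ ω, Q (k - 1) k 1 ω ∂P) :=
  intervention_specific_mean_identification_general (inst := inst) P t B hBmeas hBmono hB0 𝒲 h𝒲le
    h𝒲mono ε hε p hpver hppos Y Ystar hYint hYstarint hcons hPT Q hQtop hQmeas hQver
end

section
/- Mean-zero property of the (uncentered) influence function of the iterated g-formula functional: fix an integer k ≥ 1, adopt the core setup, and let Y_j be integrable. Then E_P[ Σ_{m=1}^k 1_{B_m} g_m^{−1} (Q^{j,k,m+1} − Q^{j,k,m}) + Q^{j,k,1} ] = φ_{j,k}; equivalently, the influence function IF(φ_{j,k}) = Σ_{m=1}^k 1_{B_m} g_m^{−1}(Q^{j,k,m+1} − Q^{j,k,m}) + Q^{j,k,1} − φ_{j,k} of Theorem 1 has mean zero under P. The conclusion holds for any choice of versions in the conditional-expectation recursion. -/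
open MeasureTheory ProbabilityTheory
open scoped ENNReal

/-- Mean-zero property of the (uncentered) influence function of the
iterated g-formula functional: under the core setup, for integrable `Y = Y_j` and any
choice of versions `Q m` in the conditional-expectation recursion,
`E_P[ Σ_{m=1}^k 1_{B m} (g m)⁻¹ (Q (m+1) - Q m) + Q 1 ] = φ_{j,k} = E_P[Q 1]`;
i.e. the influence function of Theorem 1 has mean zero under `P`. -/
theorem influence_function_mean_zero
    {Ω : Type*} [inst : MeasurableSpace Ω] (P : Measure Ω) [IsProbabilityMeasure P]
    (k : ℕ) (hk : 1 ≤ k)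
    (B : ℕ → Set Ω)
    (hBmeas : ∀ m, m ≤ k → MeasurableSet (B m))
    (hBmono : ∀ m, m < k → B (m + 1) ⊆ B m)
    (hB0 : P (B 0) = 1)
    (hBk : 0 < P (B k))
    (𝒲 : ℕ → MeasurableSpace Ω)
    (h𝒲le : ∀ m, 1 ≤ m → m ≤ k → 𝒲 m ≤ inst)
    (h𝒲mono : ∀ m, 1 ≤ m → m < k → 𝒲 m ≤ 𝒲 (m + 1))
    (ε : ℝ) (hε : 0 < ε)
    (p : ℕ → Ω → ℝ)
    (hpmeas : ∀ m, 1 ≤ m → m ≤ k → Measurable[𝒲 m] (p m))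
    (hpver : ∀ m, 1 ≤ m → m ≤ k →
      p m =ᵐ[P[|B (m - 1)]] (P[|B (m - 1)])[(B m).indicator (fun _ => (1 : ℝ))|𝒲 m])
    (hppos : ∀ m, 1 ≤ m → m ≤ k → ∀ᵐ ω ∂P, ε ≤ p m ω)
    (g : ℕ → Ω → ℝ)
    (hg : ∀ m ω, g m ω = ∏ s ∈ Finset.Icc 1 m, p s ω)
    (Y : Ω → ℝ) (hYint : Integrable Y P)
    (Q : ℕ → Ω → ℝ)
    (hQtop : Q (k + 1) = Y)
    (hQmeas : ∀ m, 1 ≤ m → m ≤ k → Measurable[𝒲 m] (Q m))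
    (hQver : ∀ m, 1 ≤ m → m ≤ k → Q m =ᵐ[P[|B m]] (P[|B m])[Q (m + 1)|𝒲 m])
    :
    ∫ ω, ((∑ m ∈ Finset.Icc 1 k,
        (B m).indicator (fun ω' => (g m ω')⁻¹ * (Q (m + 1) ω' - Q m ω')) ω)
      + Q 1 ω) ∂P = ∫ ω, Q 1 ω ∂P := by
  -- monotonicity of B along the chain
  have hBsub : ∀ a b : ℕ, a ≤ b → b ≤ k → B b ⊆ B a := by
    intro a b hab hbk
    induction hab with
    | refl => exact Set.Subset.rfl
    | @step b' hb' ih =>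
      exact (hBmono b' (by omega)).trans (ih (by omega))
  have hPBpos : ∀ m, m ≤ k → 0 < P (B m) :=
    fun m hm => lt_of_lt_of_le hBk (measure_mono (hBsub m k hm le_rfl))
  have hPBne : ∀ m, m ≤ k → P (B m) ≠ 0 := fun m hm => (hPBpos m hm).ne'
  have hPBtop : ∀ m : ℕ, P (B m) ≠ ⊤ := fun m => measure_ne_top P _
  have h𝒲aux : ∀ a c : ℕ, 1 ≤ a → a + c ≤ k → 𝒲 a ≤ 𝒲 (a + c) := by
    intro a c h1
    induction c with
    | zero => intro _; exact le_rfl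
    | succ c ih =>
      intro hck
      exact (ih (by omega)).trans (h𝒲mono (a + c) (by omega) (by omega))
  have h𝒲le' : ∀ a b : ℕ, 1 ≤ a → a ≤ b → b ≤ k → 𝒲 a ≤ 𝒲 b := by
    intro a b h1 hab hbk
    have := h𝒲aux a (b - a) h1 (by omega)
    rwa [Nat.add_sub_cancel' hab] at this
  have hprob : ∀ m, m ≤ k → IsProbabilityMeasure (P[|B m]) :=
    fun m hm => cond_isProbabilityMeasure (hPBne m hm)
  have hac : ∀ m : ℕ, (P[|B m]) ≪ P := fun m => cond_absolutelyContinuous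
  have hIntIff : ∀ m, m ≤ k → ∀ f : Ω → ℝ,
      Integrable f (P[|B m]) ↔ IntegrableOn f (B m) P := by
    intro m hm f
    rw [ProbabilityTheory.cond,
      integrable_smul_measure (ENNReal.inv_ne_zero.2 (hPBtop m))
        (ENNReal.inv_ne_top.2 (hPBne m hm))]
    exact Iff.rfl
  -- integrability of Q (m+1) w.r.t. P[|B m]
  have hQint : ∀ m, 1 ≤ m → m ≤ k → Integrable (Q (m + 1)) (P[|B m]) := by
    suffices H : ∀ d m, m + d = k → 1 ≤ m → Integrable (Q (m + 1)) (P[|B m]) by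
      intro m h1 h2; exact H (k - m) m (by omega) h1
    intro d
    induction d with
    | zero =>
      intro m hmk h1
      have hmk' : m = k := by omega
      subst hmk'
      rw [hQtop]
      exact (hIntIff m le_rfl Y).mpr hYint.integrableOn
    | succ d ih =>
      intro m hmk h1
      have hmk' : m + 1 ≤ k := by omega
      haveI := hprob (m + 1) hmk'
      haveI := hprob m (by omega)
      have hQm1 : Integrable (Q (m + 1)) (P[|B (m + 1)]) :=
        (integrable_congr (hQver (m + 1) (by omega) hmk')).mpr integrable_condExp
      have hQon : IntegrableOn (Q (m + 1)) (B (m + 1)) P :=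
        (hIntIff (m + 1) hmk' _).mp hQm1
      set μ := P[|B m] with hμ
      have hQm1meas : Measurable[𝒲 (m + 1)] (Q (m + 1)) := hQmeas (m + 1) (by omega) hmk'
      have hhsm : StronglyMeasurable[𝒲 (m + 1)] (fun ω => |Q (m + 1) ω|) :=
        (@Measurable.abs ℝ Ω _ _ _ (𝒲 (m + 1)) _ _ _ hQm1meas).stronglyMeasurable
      set h : Ω → ℝ := fun ω => |Q (m + 1) ω| with hh
      have hres : μ.restrict (B (m + 1)) = ((P (B m))⁻¹ : ℝ≥0∞) • P.restrict (B (m + 1)) := by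
        rw [hμ, ProbabilityTheory.cond, Measure.restrict_smul,
          Measure.restrict_restrict (hBmeas (m + 1) hmk'),
          Set.inter_eq_left.mpr (hBsub m (m + 1) (by omega) hmk')]
      have hhon : IntegrableOn h (B (m + 1)) μ := by
        rw [IntegrableOn, hres]
        exact (integrable_smul_measure (ENNReal.inv_ne_zero.2 (hPBtop m))
          (ENNReal.inv_ne_top.2 (hPBne m (by omega)))).mpr hQon.abs
      set f0 : Ω → ℝ := (B (m + 1)).indicator (fun _ => (1 : ℝ)) with hf0
      have hf0int : Integrable f0 μ :=
        (integrable_const (1 : ℝ)).indicator (hBmeas (m + 1) hmk')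
      have hhf0int : Integrable (h * f0) μ := by
        have hmul : h * f0 = (B (m + 1)).indicator h := by
          funext ω
          by_cases hω : ω ∈ B (m + 1) <;>
            simp [hf0, Set.indicator_of_mem, Set.indicator_of_notMem, hω]
        rw [hmul]
        exact (integrable_indicator_iff (hBmeas (m + 1) hmk')).mpr hhon
      have hpull := condExp_mul_of_stronglyMeasurable_left (μ := μ) hhsm hhf0int hf0int
      have hpv : p (m + 1) =ᵐ[μ] μ[f0|𝒲 (m + 1)] := hpver (m + 1) (by omega) hmk'
      have hhp_int : Integrable (fun ω => h ω * p (m + 1) ω) μ := by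
        have heq : (fun ω => h ω * p (m + 1) ω) =ᵐ[μ] μ[h * f0|𝒲 (m + 1)] := by
          filter_upwards [hpv, hpull] with ω h1' h2'
          rw [h2']
          show h ω * p (m + 1) ω = (h * μ[f0|𝒲 (m + 1)]) ω
          simp only [Pi.mul_apply]
          rw [h1']
        exact (integrable_congr heq).mpr integrable_condExp
      have hppμ : ∀ᵐ ω ∂μ, ε ≤ p (m + 1) ω :=
        (hppos (m + 1) (by omega) hmk').filter_mono (hac m).ae_le
      refine Integrable.mono' (hhp_int.const_mul ε⁻¹) ?_ ?_
      · exact ((hQm1meas.mono (h𝒲le (m + 1) (by omega) hmk') le_rfl).stronglyMeasurable).aestronglyMeasurable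
      · filter_upwards [hppμ] with ω hp'
        have h0 : (0 : ℝ) ≤ |Q (m + 1) ω| := abs_nonneg _
        show ‖Q (m + 1) ω‖ ≤ ε⁻¹ * (h ω * p (m + 1) ω)
        rw [Real.norm_eq_abs]
        have hεinv : (0 : ℝ) < ε⁻¹ := inv_pos.2 hε
        have : ε * |Q (m + 1) ω| ≤ p (m + 1) ω * |Q (m + 1) ω| :=
          mul_le_mul_of_nonneg_right hp' h0
        calc |Q (m + 1) ω| = ε⁻¹ * (ε * |Q (m + 1) ω|) := by field_simp
        _ ≤ ε⁻¹ * (p (m + 1) ω * |Q (m + 1) ω|) := by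
            exact mul_le_mul_of_nonneg_left this (le_of_lt hεinv)
        _ = ε⁻¹ * (h ω * p (m + 1) ω) := by rw [hh]; ring
  -- integrability of Q m w.r.t. P[|B m]
  have hQint' : ∀ m, 1 ≤ m → m ≤ k → Integrable (Q m) (P[|B m]) := by
    intro m h1 h2
    haveI := hprob m h2
    exact (integrable_congr (hQver m h1 h2)).mpr integrable_condExp
  -- g facts
  have hgmeas : ∀ m, 1 ≤ m → m ≤ k → Measurable[𝒲 m] (g m) := by
    intro m h1 h2
    have hfe : g m = fun ω => ∏ s ∈ Finset.Icc 1 m, p s ω := funext (hg m)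
    rw [hfe]
    exact Finset.measurable_prod _ (fun s hs => by
      rw [Finset.mem_Icc] at hs
      exact (hpmeas s hs.1 (hs.2.trans h2)).mono (h𝒲le' s m hs.1 hs.2 h2) le_rfl)
  have hgpos : ∀ m, 1 ≤ m → m ≤ k → ∀ᵐ ω ∂P, ε ^ m ≤ g m ω := by
    intro m h1 h2
    have hall : ∀ᵐ ω ∂P, ∀ s ∈ Finset.Icc 1 m, ε ≤ p s ω := by
      rw [Filter.eventually_all_finset]
      intro s hs; rw [Finset.mem_Icc] at hs; exact hppos s hs.1 (hs.2.trans h2)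
    filter_upwards [hall] with ω hω
    rw [hg]
    calc ε ^ m = ∏ _s ∈ Finset.Icc 1 m, ε := by
          rw [Finset.prod_const, Nat.card_Icc]; norm_num
    _ ≤ ∏ s ∈ Finset.Icc 1 m, p s ω :=
      Finset.prod_le_prod (fun _ _ => le_of_lt hε) hω
  -- each influence term integrates to zero
  have hterm : ∀ m, 1 ≤ m → m ≤ k →
      Integrable ((B m).indicator (fun ω => (g m ω)⁻¹ * (Q (m + 1) ω - Q m ω))) P ∧
      ∫ ω, (B m).indicator (fun ω' => (g m ω')⁻¹ * (Q (m + 1) ω' - Q m ω')) ω ∂P = 0 := by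
    intro m h1 h2
    haveI := hprob m h2
    set μ := P[|B m] with hμ
    set G : Ω → ℝ := fun ω => (g m ω)⁻¹ with hG
    have hGmeas : Measurable[𝒲 m] G := (hgmeas m h1 h2).inv
    have hGsm : StronglyMeasurable[𝒲 m] G := hGmeas.stronglyMeasurable
    have hGbd : ∀ᵐ ω ∂μ, |G ω| ≤ (ε ^ m)⁻¹ := by
      filter_upwards [(hgpos m h1 h2).filter_mono (hac m).ae_le] with ω hω
      have hεm : (0 : ℝ) < ε ^ m := pow_pos hε m
      have hgω : 0 < g m ω := lt_of_lt_of_le hεm hω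
      rw [hG, abs_of_pos (inv_pos.2 hgω)]
      exact inv_anti₀ hεm hω
    have hQ1int := hQint m h1 h2
    have hQ0int := hQint' m h1 h2
    have hGQint : Integrable (G * Q (m + 1)) μ := by
      refine Integrable.mono' (hQ1int.abs.const_mul ((ε ^ m)⁻¹)) ?_ ?_
      · exact (((hGmeas.mono (h𝒲le m h1 h2) le_rfl).stronglyMeasurable).aestronglyMeasurable).mul
          hQ1int.aestronglyMeasurable
      · filter_upwards [hGbd] with ω hω
        show ‖G ω * Q (m + 1) ω‖ ≤ (ε ^ m)⁻¹ * |Q (m + 1) ω|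
        rw [norm_mul, Real.norm_eq_abs, Real.norm_eq_abs]
        exact mul_le_mul_of_nonneg_right hω (abs_nonneg _)
    have hpull := condExp_mul_of_stronglyMeasurable_left (μ := μ) hGsm hGQint hQ1int
    have hGQm : G * Q m =ᵐ[μ] μ[G * Q (m + 1)|𝒲 m] := by
      filter_upwards [hpull, hQver m h1 h2] with ω hA hB
      rw [hA]
      show G ω * Q m ω = G ω * (μ[Q (m + 1)|𝒲 m]) ω
      rw [hB]
    have hGQmint : Integrable (G * Q m) μ := (integrable_congr hGQm).mpr integrable_condExp
    have hint0 : ∫ ω, G ω * (Q (m + 1) ω - Q m ω) ∂μ = 0 := by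
      have h1' : ∫ ω, (G * Q m) ω ∂μ = ∫ ω, (G * Q (m + 1)) ω ∂μ := by
        rw [integral_congr_ae hGQm]
        exact integral_condExp (h𝒲le m h1 h2)
      have heq : (fun ω => G ω * (Q (m + 1) ω - Q m ω))
          = fun ω => (G * Q (m + 1)) ω - (G * Q m) ω := by
        funext ω; simp [mul_sub]
      rw [heq, integral_sub hGQint hGQmint]
      rw [← h1', sub_self]
    have hIμ : Integrable (fun ω => G ω * (Q (m + 1) ω - Q m ω)) μ := by
      have heq : (fun ω => G ω * (Q (m + 1) ω - Q m ω))
          = fun ω => (G * Q (m + 1)) ω - (G * Q m) ω := by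
        funext ω; simp [mul_sub]
      rw [heq]; exact hGQint.sub hGQmint
    have hIOn : IntegrableOn (fun ω => G ω * (Q (m + 1) ω - Q m ω)) (B m) P :=
      (hIntIff m h2 _).mp hIμ
    constructor
    · exact (integrable_indicator_iff (hBmeas m h2)).mpr hIOn
    · rw [integral_indicator (hBmeas m h2)]
      have hscale : ∫ ω, G ω * (Q (m + 1) ω - Q m ω) ∂μ
          = ((P (B m))⁻¹).toReal * ∫ ω in B m, G ω * (Q (m + 1) ω - Q m ω) ∂P := by
        rw [hμ, ProbabilityTheory.cond, integral_smul_measure]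
        rfl
      rw [hscale] at hint0
      have hne : ((P (B m))⁻¹).toReal ≠ 0 :=
        ENNReal.toReal_ne_zero.mpr
          ⟨ENNReal.inv_ne_zero.2 (hPBtop m), ENNReal.inv_ne_top.2 (hPBne m h2)⟩
      rcases mul_eq_zero.mp hint0 with h | h
      · exact absurd h hne
      · exact h
  -- assemble
  have hsum_int : Integrable (fun ω => ∑ m ∈ Finset.Icc 1 k,
      (B m).indicator (fun ω' => (g m ω')⁻¹ * (Q (m + 1) ω' - Q m ω')) ω) P :=
    integrable_finset_sum _ (fun m hm => by
      rw [Finset.mem_Icc] at hm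
      exact (hterm m hm.1 hm.2).1)
  have hsum_zero : ∫ ω, (∑ m ∈ Finset.Icc 1 k,
      (B m).indicator (fun ω' => (g m ω')⁻¹ * (Q (m + 1) ω' - Q m ω')) ω) ∂P = 0 := by
    rw [integral_finset_sum _ (fun m hm => by
      rw [Finset.mem_Icc] at hm
      exact (hterm m hm.1 hm.2).1)]
    exact Finset.sum_eq_zero (fun m hm => by
      rw [Finset.mem_Icc] at hm
      exact (hterm m hm.1 hm.2).2)
  by_cases hQ1 : Integrable (Q 1) P
  · rw [integral_add hsum_int hQ1, hsum_zero, zero_add]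
  · rw [integral_undef hQ1, integral_undef]
    intro hcon
    exact hQ1 ((hcon.sub hsum_int).congr (Filter.Eventually.of_forall fun ω => by simp))
end

section
/- Mean-zero property of the influence function of ψ_t (Theorem 1, population form): fix an integer t ≥ 1, adopt the core setup with horizon t, and let Y₀, Y₁, …, Y_t be integrable random variables. Then E_P[ Y₀ + Σ_{k=1}^t ( {Σ_{m=1}^k 1_{B_m} g_m^{−1}(Q^{k,k,m+1} − Q^{k,k,m}) + Q^{k,k,1}} − {Σ_{m=1}^k 1_{B_m} g_m^{−1}(Q^{k−1,k,m+1} − Q^{k−1,k,m}) + Q^{k−1,k,1}} ) ] = ψ_t, where ψ_t := E_P[Y₀] + Σ_{k=1}^t (φ_{k,k} − φ_{k−1,k}); equivalently, IF(ψ_t) = IF(E[Y₀]) + Σ_{k=1}^t (IF(φ_{k,k}) − IF(φ_{k−1,k})) has mean zero under P. The conclusion holds for any choice of versions in the conditional-expectation recursions. -/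
/-!
Each summand `1_{B m} (g m)⁻¹ (Q (m+1) - Q m)` has mean zero: under `P[|B m]` the factor
`(g m)⁻¹` is `𝒲 m`-measurable and bounded (positivity gives `g m ≥ ε ^ m`), so it pulls out of
the conditional expectation given `𝒲 m`, of which `Q m` is a version.

As a version of a conditional expectation, `Q m` is integrable under `P[|B m]`; and since
`P[|B (m-1)](B m | 𝒲 m) ≥ ε`, on `𝒲 m`-sets `P[|B (m-1)]` is dominated by a multiple of
`P[|B m]`, so `Q m` is integrable under `P[|B (m-1)]` as well. For `m = 1` this is `P[|B 0] = P`, and the theorem follows by linearity.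
-/

open MeasureTheory ProbabilityTheory

theorem Nat.rel_of_forall_rel_succ_of_le_of_le_of_le {β : Type*} (r : β → β → Prop) [Std.Refl r]
    [IsTrans β r] {f : ℕ → β} {a t : ℕ} (h : ∀ n, a ≤ n → n < t → r (f n) (f (n + 1)))
    ⦃b c : ℕ⦄ (hab : a ≤ b) (hbc : b ≤ c) (hct : c ≤ t) : r (f b) (f c) := by
  induction c, hbc using Nat.le_induction with
  | base => exact refl _
  | succ c hbc ih => exact _root_.trans (ih (by omega)) (h c (by omega) (by omega))

namespace MeasureTheory

variable {Ω : Type*} {m m0 : MeasurableSpace Ω} {μ : Measure Ω}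

theorem integral_mul_sub_condExp_eq_zero [IsFiniteMeasure μ] (hm : m ≤ m0) {h f f' : Ω → ℝ}
    {c : ℝ} (hh : StronglyMeasurable[m] h) (hbdd : ∀ᵐ ω ∂μ, ‖h ω‖ ≤ c) (hf : Integrable f μ)
    (hf' : f' =ᵐ[μ] μ[f|m]) :
    ∫ ω, h ω * (f ω - f' ω) ∂μ = 0 := by
  have hh' : AEStronglyMeasurable h μ := (hh.mono hm).aestronglyMeasurable
  have hf'int : Integrable f' μ := integrable_condExp.congr hf'.symm
  have pull_out : ∫ ω, h ω * f ω ∂μ = ∫ ω, h ω * f' ω ∂μ := calc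
    ∫ ω, h ω * f ω ∂μ = ∫ ω, (μ[h * f|m]) ω ∂μ := (integral_condExp hm).symm
    _ = ∫ ω, h ω * f' ω ∂μ := integral_congr_ae <|
      (condExp_stronglyMeasurable_mul_of_bound hm hh hf c hbdd).trans
        (hf'.mono fun ω hω => by simp [hω])
  simp only [mul_sub]
  rw [integral_sub (hf.bdd_mul hh' hbdd) (hf'int.bdd_mul hh' hbdd), pull_out, sub_self]

theorem trim_le_smul_trim_restrict_of_le_condExp_indicator [IsFiniteMeasure μ] (hm : m ≤ m0)
    {A : Set Ω} (hA : MeasurableSet A) {ε : ℝ} (hε : 0 < ε)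
    (hpos : ∀ᵐ ω ∂μ, ε ≤ μ[A.indicator fun _ => (1 : ℝ)|m] ω) :
    μ.trim hm ≤ ENNReal.ofReal ε⁻¹ • (μ.restrict A).trim hm := by
  refine Measure.le_iff.mpr fun N hN => ?_
  rw [Measure.smul_apply, smul_eq_mul, trim_measurableSet_eq hm hN,
    trim_measurableSet_eq hm hN, Measure.restrict_apply (hm N hN)]
  have hcond : ε * μ.real N ≤ μ.real (N ∩ A) := calc
    ε * μ.real N = ∫ _ in N, ε ∂μ := by rw [setIntegral_const, smul_eq_mul, mul_comm]
    _ ≤ ∫ ω in N, (μ[A.indicator fun _ => (1 : ℝ)|m]) ω ∂μ :=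
      setIntegral_mono_ae (integrable_const ε).integrableOn integrable_condExp.integrableOn hpos
    _ = ∫ ω in N, A.indicator (fun _ => (1 : ℝ)) ω ∂μ :=
      setIntegral_condExp hm ((integrable_const _).indicator hA) hN
    _ = μ.real (N ∩ A) := by
      rw [setIntegral_indicator hA, setIntegral_const, smul_eq_mul, mul_one]
  rw [← ofReal_measureReal, ← ofReal_measureReal, ← ENNReal.ofReal_mul (inv_nonneg.mpr hε.le)]
  exact ENNReal.ofReal_le_ofReal ((le_inv_mul_iff₀ hε).mpr hcond)

theorem Integrable.of_integrableOn_of_le_condExp_indicator {E : Type*} [NormedAddCommGroup E]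
    [IsFiniteMeasure μ] (hm : m ≤ m0) {A : Set Ω} (hA : MeasurableSet A) {ε : ℝ} (hε : 0 < ε)
    (hpos : ∀ᵐ ω ∂μ, ε ≤ μ[A.indicator fun _ => (1 : ℝ)|m] ω) {f : Ω → E}
    (hf : StronglyMeasurable[m] f) (hfA : IntegrableOn f A μ) : Integrable f μ :=
  integrable_of_integrable_trim hm <| (hfA.trim hm hf).of_measure_le_smul ENNReal.ofReal_ne_top
    (trim_le_smul_trim_restrict_of_le_condExp_indicator hm hA hε hpos)

theorem integrable_cond_iff_integrableOn {E : Type*} [NormedAddCommGroup E] [IsFiniteMeasure μ]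
    {s : Set Ω} (hs : μ s ≠ 0) {f : Ω → E} : Integrable f μ[|s] ↔ IntegrableOn f s μ :=
  integrable_smul_measure (ENNReal.inv_ne_zero.mpr (measure_ne_top μ s))
    (ENNReal.inv_ne_top.mpr hs)

theorem setIntegral_eq_toReal_mul_integral_cond [IsFiniteMeasure μ] (s : Set Ω) (f : Ω → ℝ) :
    ∫ ω in s, f ω ∂μ = μ.real s * ∫ ω, f ω ∂μ[|s] := by
  by_cases hs : μ s = 0
  · simp [Measure.restrict_eq_zero.mpr hs, measureReal_def, hs]
  · rw [ProbabilityTheory.cond, integral_smul_measure, smul_eq_mul, ← mul_assoc,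
      ENNReal.toReal_inv, measureReal_def,
      mul_inv_cancel₀ (ENNReal.toReal_ne_zero.mpr ⟨hs, measure_ne_top μ s⟩), one_mul]

theorem IntegrableOn.of_le_condExp_indicator_cond {E : Type*} [NormedAddCommGroup E]
    [IsFiniteMeasure μ] (hm : m ≤ m0) {s A : Set Ω} (hA : MeasurableSet A) {ε : ℝ} (hε : 0 < ε)
    (hpos : ∀ᵐ ω ∂μ[|s], ε ≤ μ[|s][A.indicator fun _ => (1 : ℝ)|m] ω) {f : Ω → E}
    (hf : StronglyMeasurable[m] f) (hfA : IntegrableOn f A μ) : IntegrableOn f s μ := by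
  by_cases hs : μ s = 0
  · simp [IntegrableOn, Measure.restrict_eq_zero.mpr hs]
  rw [← integrable_cond_iff_integrableOn hs]
  refine Integrable.of_integrableOn_of_le_condExp_indicator hm hA hε hpos hf ?_
  refine (hfA.smul_measure (ENNReal.inv_ne_top.mpr hs)).mono_measure ?_
  rw [ProbabilityTheory.cond, Measure.restrict_smul]
  exact smul_le_smul_left _ (Measure.restrict_mono le_rfl Measure.restrict_le_self)

theorem integrable_indicator_mul_sub [IsFiniteMeasure μ] {s : Set Ω} (hs : MeasurableSet s)
    (hμs : μ s ≠ 0) {h f f' : Ω → ℝ} {c : ℝ} (hh : AEStronglyMeasurable h μ)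
    (hbdd : ∀ᵐ ω ∂μ, ‖h ω‖ ≤ c) (hf : Integrable f μ[|s]) (hf' : Integrable f' μ[|s]) :
    Integrable (s.indicator fun ω => h ω * (f ω - f' ω)) μ :=
  (integrable_indicator_iff hs).mpr <| (integrable_cond_iff_integrableOn hμs).mp <|
    (hf.sub hf').bdd_mul (hh.mono_ac cond_absolutelyContinuous)
      (cond_absolutelyContinuous.ae_le hbdd)

theorem integral_indicator_mul_sub_condExp_eq_zero [IsFiniteMeasure μ] (hm : m ≤ m0) {s : Set Ω}
    (hs : MeasurableSet s) {h f f' : Ω → ℝ} {c : ℝ} (hh : StronglyMeasurable[m] h)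
    (hbdd : ∀ᵐ ω ∂μ, ‖h ω‖ ≤ c) (hf : Integrable f μ[|s]) (hf' : f' =ᵐ[μ[|s]] μ[|s][f|m]) :
    ∫ ω, s.indicator (fun ω => h ω * (f ω - f' ω)) ω ∂μ = 0 := by
  rw [integral_indicator hs, setIntegral_eq_toReal_mul_integral_cond,
    integral_mul_sub_condExp_eq_zero hm hh (cond_absolutelyContinuous.ae_le hbdd) hf hf', mul_zero]

theorem measurable_prod_Icc_of_adapted {M : Type*} [CommMonoid M] [MeasurableSpace M]
    [MeasurableMul₂ M] {𝒲 : ℕ → MeasurableSpace Ω} {p : ℕ → Ω → M} {m : ℕ}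
    (h𝒲 : ∀ s, 1 ≤ s → s < m → 𝒲 s ≤ 𝒲 (s + 1))
    (hp : ∀ s, 1 ≤ s → s ≤ m → Measurable[𝒲 s] (p s)) :
    Measurable[𝒲 m] fun ω => ∏ s ∈ Finset.Icc 1 m, p s ω :=
  Finset.measurable_prod _ fun s hs => by
    obtain ⟨hs1, hsm⟩ := Finset.mem_Icc.mp hs
    exact (hp s hs1 hsm).mono
      (Nat.rel_of_forall_rel_succ_of_le_of_le_of_le (· ≤ ·) (f := 𝒲) h𝒲 hs1 hsm le_rfl) le_rfl

theorem ae_norm_inv_prod_le {ι : Type*} {S : Finset ι} {p : ι → Ω → ℝ} {ε : ℝ} (hε : 0 < ε)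
    (hp : ∀ i ∈ S, ∀ᵐ ω ∂μ, ε ≤ p i ω) : ∀ᵐ ω ∂μ, ‖(∏ i ∈ S, p i ω)⁻¹‖ ≤ (ε ^ S.card)⁻¹ := by
  filter_upwards [(Filter.eventually_all_finset S).mpr hp] with ω hω
  have hle : ε ^ S.card ≤ ∏ i ∈ S, p i ω := by
    simpa only [Finset.prod_const] using Finset.prod_le_prod (fun _ _ => hε.le) hω
  have hpos : 0 < ε ^ S.card := pow_pos hε _
  rw [norm_inv, Real.norm_of_nonneg (hpos.trans_le hle).le]
  exact inv_anti₀ hpos hle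

theorem integral_add_sum_sub {Y : Ω → ℝ} {F G : ℕ → Ω → ℝ} {S : Finset ℕ} (hY : Integrable Y μ)
    (hF : ∀ k ∈ S, Integrable (F k) μ) (hG : ∀ k ∈ S, Integrable (G k) μ) :
    ∫ ω, (Y ω + ∑ k ∈ S, (F k ω - G k ω)) ∂μ
      = ∫ ω, Y ω ∂μ + ∑ k ∈ S, (∫ ω, F k ω ∂μ - ∫ ω, G k ω ∂μ) := by
  have hFG : ∀ k ∈ S, Integrable (fun ω => F k ω - G k ω) μ := fun k hk =>
    (hF k hk).sub (hG k hk)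
  rw [integral_add hY (integrable_finsetSum S hFG), integral_finsetSum S hFG]
  exact congrArg _ (Finset.sum_congr rfl fun k hk => integral_sub (hF k hk) (hG k hk))

end MeasureTheory

section Recursion

variable {Ω : Type*} [inst : MeasurableSpace Ω] {P : Measure Ω} {B : ℕ → Set Ω}
  {𝒲 : ℕ → MeasurableSpace Ω} {ε : ℝ} {g R : ℕ → Ω → ℝ} {k : ℕ}

/-- `IF(φ_{j,k}) + φ_{j,k}` when `R = Q j k`. -/
noncomputable def uncenteredInfluenceFunction (B : ℕ → Set Ω) (g R : ℕ → Ω → ℝ) (k : ℕ)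
    (ω : Ω) : ℝ :=
  ∑ m ∈ Finset.Icc 1 k, (B m).indicator (fun ω' => (g m ω')⁻¹ * (R (m + 1) ω' - R m ω')) ω
    + R 1 ω

theorem integrableOn_pred_of_ae_eq_condExp [IsFiniteMeasure P]
    (hBmeas : ∀ m ≤ k, MeasurableSet (B m)) (hBne : ∀ m ≤ k, P (B m) ≠ 0)
    (h𝒲le : ∀ m, 1 ≤ m → m ≤ k → 𝒲 m ≤ inst) (hε : 0 < ε)
    (hpos : ∀ m, 1 ≤ m → m ≤ k → ∀ᵐ ω ∂P[|B (m - 1)],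
      ε ≤ (P[|B (m - 1)])[(B m).indicator (fun _ => (1 : ℝ))|𝒲 m] ω)
    (hRtop : Integrable (R (k + 1)) P) (hRmeas : ∀ m, 1 ≤ m → m ≤ k → Measurable[𝒲 m] (R m))
    (hRver : ∀ m, 1 ≤ m → m ≤ k → R m =ᵐ[P[|B m]] (P[|B m])[R (m + 1)|𝒲 m])
    {m : ℕ} (hm1 : 1 ≤ m) (hmk : m ≤ k + 1) : IntegrableOn (R m) (B (m - 1)) P := by
  rcases (by omega : m = k + 1 ∨ m ≤ k) with rfl | hmk'
  · exact hRtop.integrableOn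
  have hRm : IntegrableOn (R m) (B m) P :=
    (integrable_cond_iff_integrableOn (hBne m hmk')).mp
      (integrable_condExp.congr (hRver m hm1 hmk').symm)
  exact hRm.of_le_condExp_indicator_cond (h𝒲le m hm1 hmk') (hBmeas m hmk') hε
    (hpos m hm1 hmk') (hRmeas m hm1 hmk').stronglyMeasurable

theorem integrable_and_integral_uncenteredInfluenceFunction [IsProbabilityMeasure P]
    (hBmeas : ∀ m ≤ k, MeasurableSet (B m)) (hB0 : P (B 0) = 1)
    (hBne : ∀ m ≤ k, P (B m) ≠ 0) (h𝒲le : ∀ m, 1 ≤ m → m ≤ k → 𝒲 m ≤ inst) (hε : 0 < ε)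
    (hpos : ∀ m, 1 ≤ m → m ≤ k → ∀ᵐ ω ∂P[|B (m - 1)],
      ε ≤ (P[|B (m - 1)])[(B m).indicator (fun _ => (1 : ℝ))|𝒲 m] ω)
    (hgmeas : ∀ m, 1 ≤ m → m ≤ k → Measurable[𝒲 m] (g m))
    (hgbdd : ∀ m, 1 ≤ m → m ≤ k → ∃ c, ∀ᵐ ω ∂P, ‖(g m ω)⁻¹‖ ≤ c)
    (hRtop : Integrable (R (k + 1)) P) (hRmeas : ∀ m, 1 ≤ m → m ≤ k → Measurable[𝒲 m] (R m))
    (hRver : ∀ m, 1 ≤ m → m ≤ k → R m =ᵐ[P[|B m]] (P[|B m])[R (m + 1)|𝒲 m]) :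
    Integrable (uncenteredInfluenceFunction B g R k) P ∧
      ∫ ω, uncenteredInfluenceFunction B g R k ω ∂P = ∫ ω, R 1 ω ∂P := by
  have hRon := fun {m} => integrableOn_pred_of_ae_eq_condExp (m := m) hBmeas hBne h𝒲le hε hpos
    hRtop hRmeas hRver
  have hR1 : Integrable (R 1) P := by
    have hae : ∀ᵐ ω ∂P, ω ∈ B 0 := (mem_ae_iff_prob_eq_one (hBmeas 0 (Nat.zero_le k))).mpr hB0
    simpa [IntegrableOn, Measure.restrict_eq_self_of_ae_mem hae] using hRon le_rfl (by omega)
  have hterm : ∀ m ∈ Finset.Icc 1 k,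
      let term := (B m).indicator fun ω => (g m ω)⁻¹ * (R (m + 1) ω - R m ω)
      Integrable term P ∧ ∫ ω, term ω ∂P = 0 := by
    intro m hm
    obtain ⟨hm1, hmk⟩ := Finset.mem_Icc.mp hm
    obtain ⟨c, hc⟩ := hgbdd m hm1 hmk
    have hh : StronglyMeasurable[𝒲 m] fun ω => (g m ω)⁻¹ :=
      (hgmeas m hm1 hmk).inv.stronglyMeasurable
    have hRnext : Integrable (R (m + 1)) P[|B m] :=
      (integrable_cond_iff_integrableOn (hBne m hmk)).mpr (hRon (by omega) (by omega))
    have hRm : Integrable (R m) P[|B m] := integrable_condExp.congr (hRver m hm1 hmk).symm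
    exact ⟨integrable_indicator_mul_sub (hBmeas m hmk) (hBne m hmk)
        (hh.mono (h𝒲le m hm1 hmk)).aestronglyMeasurable hc hRnext hRm,
      integral_indicator_mul_sub_condExp_eq_zero (h𝒲le m hm1 hmk) (hBmeas m hmk) hh hc hRnext
        (hRver m hm1 hmk)⟩
  have hsum := integrable_finsetSum _ fun m hm => (hterm m hm).1
  refine ⟨hsum.add hR1, ?_⟩
  unfold uncenteredInfluenceFunction
  rw [integral_add hsum hR1, integral_finsetSum _ fun m hm => (hterm m hm).1,
    Finset.sum_eq_zero fun m hm => (hterm m hm).2, zero_add]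

end Recursion

theorem influence_function_psi_mean_zero_general
    {Ω : Type*} [inst : MeasurableSpace Ω] (P : Measure Ω) [IsProbabilityMeasure P]
    (t : ℕ)
    (B : ℕ → Set Ω)
    (hBmeas : ∀ m, m ≤ t → MeasurableSet (B m))
    (hBmono : ∀ m, m < t → B (m + 1) ⊆ B m)
    (hB0 : P (B 0) = 1)
    (hBt : 0 < P (B t))
    (𝒲 : ℕ → MeasurableSpace Ω)
    (h𝒲le : ∀ m, 1 ≤ m → m ≤ t → 𝒲 m ≤ inst)
    (h𝒲mono : ∀ m, 1 ≤ m → m < t → 𝒲 m ≤ 𝒲 (m + 1))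
    (ε : ℝ) (hε : 0 < ε)
    (p : ℕ → Ω → ℝ)
    (hpmeas : ∀ m, 1 ≤ m → m ≤ t → Measurable[𝒲 m] (p m))
    (hpver : ∀ m, 1 ≤ m → m ≤ t →
      p m =ᵐ[P[|B (m - 1)]] (P[|B (m - 1)])[(B m).indicator (fun _ => (1 : ℝ))|𝒲 m])
    (hppos : ∀ m, 1 ≤ m → m ≤ t → ∀ᵐ ω ∂P, ε ≤ p m ω)
    (g : ℕ → Ω → ℝ)
    (hg : ∀ m ω, g m ω = ∏ s ∈ Finset.Icc 1 m, p s ω)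
    (Y : ℕ → Ω → ℝ)
    (hYint : ∀ s, s ≤ t → Integrable (Y s) P)
    (Q : ℕ → ℕ → ℕ → Ω → ℝ)
    (hQtop : ∀ k, 1 ≤ k → k ≤ t → ∀ j, (j = k - 1 ∨ j = k) → Q j k (k + 1) = Y j)
    (hQmeas : ∀ k, 1 ≤ k → k ≤ t → ∀ j, (j = k - 1 ∨ j = k) →
      ∀ m, 1 ≤ m → m ≤ k → Measurable[𝒲 m] (Q j k m))
    (hQver : ∀ k, 1 ≤ k → k ≤ t → ∀ j, (j = k - 1 ∨ j = k) →
      ∀ m, 1 ≤ m → m ≤ k → Q j k m =ᵐ[P[|B m]] (P[|B m])[Q j k (m + 1)|𝒲 m])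
    :
    ∫ ω, (Y 0 ω + ∑ k ∈ Finset.Icc 1 t,
        (((∑ m ∈ Finset.Icc 1 k,
            (B m).indicator (fun ω' => (g m ω')⁻¹ * (Q k k (m + 1) ω' - Q k k m ω')) ω)
          + Q k k 1 ω)
        - ((∑ m ∈ Finset.Icc 1 k,
            (B m).indicator
              (fun ω' => (g m ω')⁻¹ * (Q (k - 1) k (m + 1) ω' - Q (k - 1) k m ω')) ω)
          + Q (k - 1) k 1 ω))) ∂P
    = (∫ ω, Y 0 ω ∂P)
      + ∑ k ∈ Finset.Icc 1 t, ((∫ ω, Q k k 1 ω ∂P) - ∫ ω, Q (k - 1) k 1 ω ∂P) := by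
  have hBne : ∀ m ≤ t, P (B m) ≠ 0 := fun m hm => (hBt.trans_le <| measure_mono <|
    Nat.rel_of_forall_rel_succ_of_le_of_le_of_le (fun s s' : Set Ω => s' ⊆ s) (f := B)
      (fun n _ hn => hBmono n hn) (Nat.zero_le m) hm le_rfl).ne'
  have hgmeas : ∀ m, 1 ≤ m → m ≤ t → Measurable[𝒲 m] (g m) := fun m _ hmt => by
    rw [funext (hg m)]
    exact measurable_prod_Icc_of_adapted (fun s hs1 hsm => h𝒲mono s hs1 (hsm.trans_le hmt))
      (fun s hs1 hsm => hpmeas s hs1 (hsm.trans hmt))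
  have hgbdd : ∀ m, 1 ≤ m → m ≤ t → ∃ c, ∀ᵐ ω ∂P, ‖(g m ω)⁻¹‖ ≤ c := fun m _ hmt =>
    ⟨_, by simpa only [hg] using ae_norm_inv_prod_le hε fun s hs =>
      hppos s (Finset.mem_Icc.mp hs).1 ((Finset.mem_Icc.mp hs).2.trans hmt)⟩
  have hpos : ∀ m, 1 ≤ m → m ≤ t → ∀ᵐ ω ∂P[|B (m - 1)],
      ε ≤ (P[|B (m - 1)])[(B m).indicator (fun _ => (1 : ℝ))|𝒲 m] ω := fun m hm1 hmt => by
    filter_upwards [cond_absolutelyContinuous.ae_le (hppos m hm1 hmt), hpver m hm1 hmt]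
      with ω hε hp using hp ▸ hε
  have hIF : ∀ k ∈ Finset.Icc 1 t, ∀ j, (j = k - 1 ∨ j = k) →
      Integrable (uncenteredInfluenceFunction B g (Q j k) k) P ∧
        ∫ ω, uncenteredInfluenceFunction B g (Q j k) k ω ∂P = ∫ ω, Q j k 1 ω ∂P := by
    intro k hk j hj
    obtain ⟨hk1, hkt⟩ := Finset.mem_Icc.mp hk
    have hjt : j ≤ t := by omega
    exact integrable_and_integral_uncenteredInfluenceFunction
      (fun m hm => hBmeas m (hm.trans hkt)) hB0 (fun m hm => hBne m (hm.trans hkt))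
      (fun m hm1 hm => h𝒲le m hm1 (hm.trans hkt)) hε (fun m hm1 hm => hpos m hm1 (hm.trans hkt))
      (fun m hm1 hm => hgmeas m hm1 (hm.trans hkt)) (fun m hm1 hm => hgbdd m hm1 (hm.trans hkt))
      (hQtop k hk1 hkt j hj ▸ hYint j hjt) (hQmeas k hk1 hkt j hj) (hQver k hk1 hkt j hj)
  change ∫ ω, (Y 0 ω + ∑ k ∈ Finset.Icc 1 t, (uncenteredInfluenceFunction B g (Q k k) k ω
    - uncenteredInfluenceFunction B g (Q (k - 1) k) k ω)) ∂P = _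
  rw [integral_add_sum_sub (hYint 0 (Nat.zero_le t)) (fun k hk => (hIF k hk k (.inr rfl)).1)
    (fun k hk => (hIF k hk (k - 1) (.inl rfl)).1)]
  refine congrArg _ (Finset.sum_congr rfl fun k hk => ?_)
  rw [(hIF k hk k (.inr rfl)).2, (hIF k hk (k - 1) (.inl rfl)).2]

/-- Mean-zero property of the influence function of `ψ_t` (Theorem 1,
population form): under the core setup with horizon `t`, integrable observed outcomes
`Y 0, …, Y t`, and any choice of versions `Q j k m` in the conditional-expectation
recursions,
`E_P[ Y 0 + Σ_{k=1}^t ({Σ_{m=1}^k 1_{B m} (g m)⁻¹ (Q k k (m+1) - Q k k m) + Q k k 1}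
  - {Σ_{m=1}^k 1_{B m} (g m)⁻¹ (Q (k-1) k (m+1) - Q (k-1) k m) + Q (k-1) k 1}) ] = ψ_t`
where `ψ_t = E_P[Y 0] + Σ_{k=1}^t (φ_{k,k} - φ_{k-1,k})` and `φ_{j,k} = E_P[Q j k 1]`;
equivalently, `IF(ψ_t)` has mean zero under `P`. -/
theorem influence_function_psi_mean_zero
    {Ω : Type*} [inst : MeasurableSpace Ω] (P : Measure Ω) [IsProbabilityMeasure P]
    (t : ℕ) (ht : 1 ≤ t)
    (B : ℕ → Set Ω)
    (hBmeas : ∀ m, m ≤ t → MeasurableSet (B m))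
    (hBmono : ∀ m, m < t → B (m + 1) ⊆ B m)
    (hB0 : P (B 0) = 1)
    (hBt : 0 < P (B t))
    (𝒲 : ℕ → MeasurableSpace Ω)
    (h𝒲le : ∀ m, 1 ≤ m → m ≤ t → 𝒲 m ≤ inst)
    (h𝒲mono : ∀ m, 1 ≤ m → m < t → 𝒲 m ≤ 𝒲 (m + 1))
    (ε : ℝ) (hε : 0 < ε)
    (p : ℕ → Ω → ℝ)
    (hpmeas : ∀ m, 1 ≤ m → m ≤ t → Measurable[𝒲 m] (p m))
    (hpver : ∀ m, 1 ≤ m → m ≤ t →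
      p m =ᵐ[P[|B (m - 1)]] (P[|B (m - 1)])[(B m).indicator (fun _ => (1 : ℝ))|𝒲 m])
    (hppos : ∀ m, 1 ≤ m → m ≤ t → ∀ᵐ ω ∂P, ε ≤ p m ω)
    (g : ℕ → Ω → ℝ)
    (hg : ∀ m ω, g m ω = ∏ s ∈ Finset.Icc 1 m, p s ω)
    (Y : ℕ → Ω → ℝ)
    (hYint : ∀ s, s ≤ t → Integrable (Y s) P)
    (Q : ℕ → ℕ → ℕ → Ω → ℝ)
    (hQtop : ∀ k, 1 ≤ k → k ≤ t → ∀ j, (j = k - 1 ∨ j = k) → Q j k (k + 1) = Y j)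
    (hQmeas : ∀ k, 1 ≤ k → k ≤ t → ∀ j, (j = k - 1 ∨ j = k) →
      ∀ m, 1 ≤ m → m ≤ k → Measurable[𝒲 m] (Q j k m))
    (hQver : ∀ k, 1 ≤ k → k ≤ t → ∀ j, (j = k - 1 ∨ j = k) →
      ∀ m, 1 ≤ m → m ≤ k → Q j k m =ᵐ[P[|B m]] (P[|B m])[Q j k (m + 1)|𝒲 m])
    :
    ∫ ω, (Y 0 ω + ∑ k ∈ Finset.Icc 1 t,
        (((∑ m ∈ Finset.Icc 1 k,
            (B m).indicator (fun ω' => (g m ω')⁻¹ * (Q k k (m + 1) ω' - Q k k m ω')) ω)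
          + Q k k 1 ω)
        - ((∑ m ∈ Finset.Icc 1 k,
            (B m).indicator
              (fun ω' => (g m ω')⁻¹ * (Q (k - 1) k (m + 1) ω' - Q (k - 1) k m ω')) ω)
          + Q (k - 1) k 1 ω))) ∂P
    = (∫ ω, Y 0 ω ∂P)
      + ∑ k ∈ Finset.Icc 1 t, ((∫ ω, Q k k 1 ω ∂P) - ∫ ω, Q (k - 1) k 1 ω ∂P) :=
  influence_function_psi_mean_zero_general (inst := inst) P t B hBmeas hBmono hB0 hBt 𝒲 h𝒲le h𝒲mono
    ε hε p hpmeas hpver hppos g hg Y hYint Q hQtop hQmeas hQver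
end

section
/- Each augmentation term of the influence function has mean zero: fix an integer k ≥ 1, adopt the core setup, and let Y_j be integrable. Then for every m ∈ {1,…,k}, E_P[ 1_{B_m} g_m^{−1} (Q^{j,k,m+1} − Q^{j,k,m}) ] = 0, for any choice of versions in the conditional-expectation recursion. -/
/-!
Under `P[|B m]`, `Q m` is a version of `E[Q (m+1) | 𝒲 m]` and `(g m)⁻¹` is `𝒲 m`-measurable with
`1 ≤ (g m)⁻¹ ≤ ε⁻ᵐ` (each `p s` is a conditional probability bounded below by `ε`), so it can be
pulled out of the conditional expectation: `∫ (g m)⁻¹ Q (m+1) = ∫ (g m)⁻¹ Q m` on `P[|B m]`, and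
rescaling by `P (B m)` turns this into the integral over `B m`. If `Q (m+1)` is not
`P[|B m]`-integrable, the conditional expectation is the junk value `0`; the integral then
vanishes as well because `(g m)⁻¹ ≥ 1` makes `(g m)⁻¹ Q (m+1)` non-integrable too.
-/

open MeasureTheory ProbabilityTheory

section ConditionalMeasure

variable {Ω : Type*} {mΩ : MeasurableSpace Ω} {μ : Measure Ω} {s t : Set Ω}

theorem integral_cond_eq_inv_mul_setIntegral (f : Ω → ℝ) :
    ∫ ω, f ω ∂μ[|s] = (μ.real s)⁻¹ * ∫ ω in s, f ω ∂μ := by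
  rw [ProbabilityTheory.cond, integral_smul_measure, ENNReal.toReal_inv, smul_eq_mul,
    measureReal_def]

theorem cond_absolutelyContinuous_cond_of_subset [IsFiniteMeasure μ] (hts : t ⊆ s) :
    μ[|t] ≪ μ[|s] :=
  Measure.smul_absolutelyContinuous.trans <|
    (Measure.restrict_mono hts le_rfl).absolutelyContinuous.trans <|
      Measure.absolutelyContinuous_smul (ENNReal.inv_ne_zero.2 (measure_ne_top μ s))

end ConditionalMeasure

theorem norm_inv_prod_mem_Icc {ι : Type*} {s : Finset ι} {p : ι → ℝ} {ε : ℝ} (hε : 0 < ε)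
    (hp : ∀ i ∈ s, ε ≤ p i ∧ p i ≤ 1) :
    ‖(∏ i ∈ s, p i)⁻¹‖ ∈ Set.Icc 1 (ε ^ s.card)⁻¹ := by
  have hp₀ : ∀ i ∈ s, 0 ≤ p i := fun i hi => hε.le.trans (hp i hi).1
  have hpos : 0 < ∏ i ∈ s, p i := Finset.prod_pos fun i hi => hε.trans_le (hp i hi).1
  have hε_le : ε ^ s.card ≤ ∏ i ∈ s, p i := by
    simpa only [Finset.prod_const] using
      Finset.prod_le_prod (fun _ _ => hε.le) fun i hi => (hp i hi).1
  rw [Real.norm_of_nonneg (inv_nonneg.2 hpos.le)]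
  exact ⟨(one_le_inv₀ hpos).2 (Finset.prod_le_one hp₀ fun i hi => (hp i hi).2),
    inv_anti₀ (pow_pos hε _) hε_le⟩

section ConditionalExpectation

variable {Ω : Type*} {m m₀ : MeasurableSpace Ω} {μ : Measure Ω} {f X : Ω → ℝ} {C c : ℝ}

theorem ae_le_one_of_ae_eq_condExp_indicator {s : Set Ω} {p : Ω → ℝ}
    (hp : p =ᵐ[μ] μ[s.indicator (fun _ => (1 : ℝ))|m]) : ∀ᵐ ω ∂μ, p ω ≤ 1 := by
  have hbdd := ae_bdd_abs_condExp_of_ae_bdd_abs (m := m) (μ := μ) (R := 1)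
    (f := s.indicator fun _ => (1 : ℝ)) (ae_of_all _ fun ω => by
      simpa using norm_indicator_le_norm_self (s := s) (fun _ => (1 : ℝ)) ω)
  filter_upwards [hp, hbdd] with ω hpω hω
  rw [hpω]
  exact (le_abs_self _).trans hω

theorem MeasureTheory.Integrable.of_mul_left_of_le_norm (hf : AEStronglyMeasurable f μ)
    (hc : 0 < c) (hf_ge : ∀ᵐ ω ∂μ, c ≤ ‖f ω‖) (hfX : Integrable (fun ω => f ω * X ω) μ) :
    Integrable X μ := by
  refine (hfX.bdd_mul hf.aemeasurable.inv.aestronglyMeasurable (c := c⁻¹) ?_).congr ?_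
  · filter_upwards [hf_ge] with ω hω
    rw [Pi.inv_apply, norm_inv]
    exact inv_anti₀ hc hω
  · filter_upwards [hf_ge] with ω hω
    rw [Pi.inv_apply, inv_mul_cancel_left₀ (norm_pos_iff.1 (hc.trans_le hω))]

variable [IsFiniteMeasure μ]

theorem integral_mul_condExp_of_stronglyMeasurable_left (hm : m ≤ m₀)
    (hf : StronglyMeasurable[m] f) (hf_bdd : ∀ᵐ ω ∂μ, ‖f ω‖ ≤ C) (hX : Integrable X μ) :
    ∫ ω, f ω * μ[X|m] ω ∂μ = ∫ ω, f ω * X ω ∂μ := by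
  have hfX : Integrable (f * X) μ := hX.bdd_mul (hf.mono hm).aestronglyMeasurable hf_bdd
  calc ∫ ω, f ω * μ[X|m] ω ∂μ = ∫ ω, μ[f * X|m] ω ∂μ :=
        integral_congr_ae (condExp_mul_of_stronglyMeasurable_left hf hfX hX).symm
    _ = ∫ ω, f ω * X ω ∂μ := integral_condExp hm

theorem integral_mul_sub_condExp_eq_zero (hm : m ≤ m₀) (hf : StronglyMeasurable[m] f)
    (hf_bdd : ∀ᵐ ω ∂μ, ‖f ω‖ ≤ C) (hc : 0 < c) (hf_ge : ∀ᵐ ω ∂μ, c ≤ ‖f ω‖) :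
    ∫ ω, f ω * (X ω - μ[X|m] ω) ∂μ = 0 := by
  have hf' : AEStronglyMeasurable f μ := (hf.mono hm).aestronglyMeasurable
  by_cases hX : Integrable X μ
  · simp_rw [mul_sub]
    rw [integral_sub (hX.bdd_mul hf' hf_bdd) (integrable_condExp.bdd_mul hf' hf_bdd),
      integral_mul_condExp_of_stronglyMeasurable_left hm hf hf_bdd hX, sub_self]
  · rw [condExp_of_not_integrable hX]
    simpa using integral_undef fun h => hX (h.of_mul_left_of_le_norm hf' hc hf_ge)

theorem setIntegral_mul_sub_eq_zero_of_ae_eq_condExp_cond {s : Set Ω} {Y : Ω → ℝ}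
    (hm : m ≤ m₀) (hs : μ s ≠ 0) (hf : StronglyMeasurable[m] f)
    (hf_bdd : ∀ᵐ ω ∂μ[|s], ‖f ω‖ ≤ C) (hc : 0 < c) (hf_ge : ∀ᵐ ω ∂μ[|s], c ≤ ‖f ω‖)
    (hY : Y =ᵐ[μ[|s]] μ[|s][X|m]) :
    ∫ ω in s, f ω * (X ω - Y ω) ∂μ = 0 := by
  have hcond : ∫ ω, f ω * (X ω - Y ω) ∂μ[|s] = 0 := by
    rw [integral_congr_ae (hY.mono fun ω hω => by rw [hω])]
    exact integral_mul_sub_condExp_eq_zero hm hf hf_bdd hc hf_ge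
  rw [integral_cond_eq_inv_mul_setIntegral] at hcond
  exact (mul_eq_zero.1 hcond).resolve_left
    (inv_ne_zero ((measureReal_ne_zero_iff (measure_ne_top μ s)).2 hs))

end ConditionalExpectation

theorem augmentation_term_mean_zero_general
    {Ω : Type*} [inst : MeasurableSpace Ω] (P : Measure Ω) [IsProbabilityMeasure P]
    (k : ℕ)
    (B : ℕ → Set Ω)
    (hBmono : ∀ m, m < k → B (m + 1) ⊆ B m)
    (hBk : 0 < P (B k))
    (𝒲 : ℕ → MeasurableSpace Ω)
    (h𝒲le : ∀ m, 1 ≤ m → m ≤ k → 𝒲 m ≤ inst)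
    (h𝒲mono : ∀ m, 1 ≤ m → m < k → 𝒲 m ≤ 𝒲 (m + 1))
    (ε : ℝ) (hε : 0 < ε)
    (p : ℕ → Ω → ℝ)
    (hpmeas : ∀ m, 1 ≤ m → m ≤ k → Measurable[𝒲 m] (p m))
    (hpver : ∀ m, 1 ≤ m → m ≤ k →
      p m =ᵐ[P[|B (m - 1)]] (P[|B (m - 1)])[(B m).indicator (fun _ => (1 : ℝ))|𝒲 m])
    (hppos : ∀ m, 1 ≤ m → m ≤ k → ∀ᵐ ω ∂P, ε ≤ p m ω)
    (g : ℕ → Ω → ℝ)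
    (hg : ∀ m ω, g m ω = ∏ s ∈ Finset.Icc 1 m, p s ω)
    (Q : ℕ → Ω → ℝ)
    (hQver : ∀ m, 1 ≤ m → m ≤ k → Q m =ᵐ[P[|B m]] (P[|B m])[Q (m + 1)|𝒲 m])
    :
    ∀ m, 1 ≤ m → m ≤ k →
      ∫ ω in B m, (g m ω)⁻¹ * (Q (m + 1) ω - Q m ω) ∂P = 0 := by
  intro m hm1 hmk
  have hB_anti : AntitoneOn B (Set.Iic k) :=
    antitoneOn_of_succ_le Set.ordConnected_Iic fun n _ _ hn => hBmono n (Order.succ_le_iff.1 hn)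
  have h𝒲_mono : MonotoneOn 𝒲 (Set.Icc 1 k) :=
    monotoneOn_of_le_succ Set.ordConnected_Icc fun n _ hn hsn =>
      h𝒲mono n hn.1 (Order.succ_le_iff.1 hsn.2)
  have hPBm : P (B m) ≠ 0 :=
    (hBk.trans_le (measure_mono (hB_anti hmk (le_refl k) hmk))).ne'
  have hp_bounds : ∀ᵐ ω ∂P[|B m], ∀ s ∈ Finset.Icc 1 m, ε ≤ p s ω ∧ p s ω ≤ 1 := by
    refine (Filter.eventually_all_finset _).2 fun s hs => ?_
    obtain ⟨hs1, hsm⟩ := Finset.mem_Icc.1 hs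
    have hBsub : B m ⊆ B (s - 1) :=
      hB_anti (Set.mem_Iic.2 (by omega)) (Set.mem_Iic.2 hmk) (by omega)
    filter_upwards [cond_absolutelyContinuous.ae_le (hppos s hs1 (hsm.trans hmk)),
      (cond_absolutelyContinuous_cond_of_subset hBsub).ae_le
        (ae_le_one_of_ae_eq_condExp_indicator (hpver s hs1 (hsm.trans hmk)))]
      with ω hge hle using ⟨hge, hle⟩
  have hf_meas : StronglyMeasurable[𝒲 m] fun ω => (g m ω)⁻¹ := by
    simp_rw [hg]
    refine (Finset.measurable_prod _ fun s hs => ?_).inv.stronglyMeasurable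
    obtain ⟨hs1, hsm⟩ := Finset.mem_Icc.1 hs
    exact (hpmeas s hs1 (hsm.trans hmk)).mono
      (h𝒲_mono ⟨hs1, hsm.trans hmk⟩ ⟨hm1, hmk⟩ hsm) le_rfl
  have hf_bounds : ∀ᵐ ω ∂P[|B m], ‖(g m ω)⁻¹‖ ∈ Set.Icc 1 (ε ^ m)⁻¹ := by
    filter_upwards [hp_bounds] with ω hω
    simpa [hg] using norm_inv_prod_mem_Icc hε hω
  exact setIntegral_mul_sub_eq_zero_of_ae_eq_condExp_cond (h𝒲le m hm1 hmk) hPBm hf_meas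
    (hf_bounds.mono fun _ h => h.2) one_pos (hf_bounds.mono fun _ h => h.1) (hQver m hm1 hmk)

/-- Each augmentation term of the influence function has mean zero:
under the core setup with integrable `Y = Y_j` and any choice of versions
`Q m` of the iterated conditional expectations (`Q (k+1) = Y`,
`Q m` a `𝒲 m`-measurable version of `E[Q (m+1) | 𝒲 m]` under `P[|B m]`),
for every `1 ≤ m ≤ k`, `E_P[1_{B m} (g m)⁻¹ (Q (m+1) - Q m)] = 0`. -/
theorem augmentation_term_mean_zero
    {Ω : Type*} [inst : MeasurableSpace Ω] (P : Measure Ω) [IsProbabilityMeasure P]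
    (k : ℕ) (hk : 1 ≤ k)
    (B : ℕ → Set Ω)
    (hBmeas : ∀ m, m ≤ k → MeasurableSet (B m))
    (hBmono : ∀ m, m < k → B (m + 1) ⊆ B m)
    (hB0 : P (B 0) = 1)
    (hBk : 0 < P (B k))
    (𝒲 : ℕ → MeasurableSpace Ω)
    (h𝒲le : ∀ m, 1 ≤ m → m ≤ k → 𝒲 m ≤ inst)
    (h𝒲mono : ∀ m, 1 ≤ m → m < k → 𝒲 m ≤ 𝒲 (m + 1))
    (ε : ℝ) (hε : 0 < ε)
    (p : ℕ → Ω → ℝ)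
    (hpmeas : ∀ m, 1 ≤ m → m ≤ k → Measurable[𝒲 m] (p m))
    (hpver : ∀ m, 1 ≤ m → m ≤ k →
      p m =ᵐ[P[|B (m - 1)]] (P[|B (m - 1)])[(B m).indicator (fun _ => (1 : ℝ))|𝒲 m])
    (hppos : ∀ m, 1 ≤ m → m ≤ k → ∀ᵐ ω ∂P, ε ≤ p m ω)
    (g : ℕ → Ω → ℝ)
    (hg : ∀ m ω, g m ω = ∏ s ∈ Finset.Icc 1 m, p s ω)
    (Y : Ω → ℝ) (hYint : Integrable Y P)
    (Q : ℕ → Ω → ℝ)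
    (hQtop : Q (k + 1) = Y)
    (hQmeas : ∀ m, 1 ≤ m → m ≤ k → Measurable[𝒲 m] (Q m))
    (hQver : ∀ m, 1 ≤ m → m ≤ k → Q m =ᵐ[P[|B m]] (P[|B m])[Q (m + 1)|𝒲 m])
    :
    ∀ m, 1 ≤ m → m ≤ k →
      ∫ ω in B m, (g m ω)⁻¹ * (Q (m + 1) ω - Q m ω) ∂P = 0 :=
  augmentation_term_mean_zero_general (inst := inst) P k B hBmono hBk 𝒲 h𝒲le h𝒲mono ε hε p hpmeas
    hpver hppos g hg Q hQver
end

section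
/- Propensity-weighting reduction lemma: fix an integer k ≥ 1 and adopt the core setup. Then for every m ∈ {1,…,k} and every bounded 𝒲_m-measurable random variable F, E_P[ 1_{B_m} g_m^{−1} F ] = E_P[ 1_{B_{m−1}} g_{m−1}^{−1} F ]. -/
open MeasureTheory ProbabilityTheory

/-- Propensity-weighting reduction lemma. Under the core setup
(events `B 0 ⊇ ⋯ ⊇ B k` with `P (B 0) = 1`, `P (B k) > 0`; increasing sub-σ-algebras
`𝒲 m`; `p m` a `𝒲 m`-measurable version of the conditional probability of `B m` given
`𝒲 m` under `P[|B (m-1)]`, bounded below by `ε`; cumulative propensity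
`g m = ∏_{s=1}^m p s`), for every `1 ≤ m ≤ k` and every bounded `𝒲 m`-measurable `F`,
`E_P[1_{B m} (g m)⁻¹ F] = E_P[1_{B (m-1)} (g (m-1))⁻¹ F]`. -/
theorem propensity_weighting_reduction
    {Ω : Type*} [inst : MeasurableSpace Ω] (P : Measure Ω) [IsProbabilityMeasure P]
    (k : ℕ) (hk : 1 ≤ k)
    (B : ℕ → Set Ω)
    (hBmeas : ∀ m, m ≤ k → MeasurableSet (B m))
    (hBmono : ∀ m, m < k → B (m + 1) ⊆ B m)
    (hB0 : P (B 0) = 1)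
    (hBk : 0 < P (B k))
    (𝒲 : ℕ → MeasurableSpace Ω)
    (h𝒲le : ∀ m, 1 ≤ m → m ≤ k → 𝒲 m ≤ inst)
    (h𝒲mono : ∀ m, 1 ≤ m → m < k → 𝒲 m ≤ 𝒲 (m + 1))
    (ε : ℝ) (hε : 0 < ε)
    (p : ℕ → Ω → ℝ)
    (hpmeas : ∀ m, 1 ≤ m → m ≤ k → Measurable[𝒲 m] (p m))
    (hpver : ∀ m, 1 ≤ m → m ≤ k →
      p m =ᵐ[P[|B (m - 1)]] (P[|B (m - 1)])[(B m).indicator (fun _ => (1 : ℝ))|𝒲 m])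
    (hppos : ∀ m, 1 ≤ m → m ≤ k → ∀ᵐ ω ∂P, ε ≤ p m ω)
    (g : ℕ → Ω → ℝ)
    (hg : ∀ m ω, g m ω = ∏ s ∈ Finset.Icc 1 m, p s ω) :
    ∀ m, 1 ≤ m → m ≤ k → ∀ F : Ω → ℝ, Measurable[𝒲 m] F → (∃ C, ∀ ω, |F ω| ≤ C) →
      ∫ ω in B m, (g m ω)⁻¹ * F ω ∂P = ∫ ω in B (m - 1), (g (m - 1) ω)⁻¹ * F ω ∂P := by
  intro m hm1 hmk F hFmeas hFbd
  obtain ⟨n, rfl⟩ : ∃ n, m = n + 1 := ⟨m - 1, by omega⟩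
  obtain ⟨C, hC⟩ := hFbd
  simp only [Nat.add_sub_cancel] at *
  -- antitonicity of B
  have hBanti : ∀ j, j ≤ k → ∀ i, i ≤ j → B j ⊆ B i := by
    intro j hjk
    induction j with
    | zero => intro i hi; rw [Nat.le_zero.mp hi]
    | succ j ih =>
      intro i hi
      rcases Nat.lt_succ_iff_lt_or_eq.mp (Nat.lt_succ_of_le hi) with h | h
      · exact (hBmono j (by omega)).trans (ih (by omega) i (by omega))
      · rw [h]
  -- monotonicity of 𝒲
  have h𝒲anti : ∀ t, t ≤ k → ∀ s, 1 ≤ s → s ≤ t → 𝒲 s ≤ 𝒲 t := by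
    intro t htk
    induction t with
    | zero => intro s hs hst; omega
    | succ t ih =>
      intro s hs hst
      rcases Nat.lt_succ_iff_lt_or_eq.mp (Nat.lt_succ_of_le hst) with h | h
      · exact (ih (by omega) s hs (by omega)).trans (h𝒲mono t (by omega) (by omega))
      · exact h ▸ le_rfl
  have hsub : B (n + 1) ⊆ B n := hBmono n (by omega)
  have hnk : n ≤ k := by omega
  have hsP : P (B n) ≠ 0 := by
    refine fun h => absurd hBk ?_
    simp only [not_lt, ← h]
    exact measure_mono (hBanti k le_rfl n hnk)
  set μ : Measure Ω := P[|B n] with hμdef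
  haveI : IsProbabilityMeasure μ := cond_isProbabilityMeasure hsP
  have hac : μ ≪ P := cond_absolutelyContinuous
  have hm𝒲 : 𝒲 (n + 1) ≤ inst := h𝒲le (n + 1) hm1 hmk
  haveI : SigmaFinite (μ.trim hm𝒲) := by infer_instance
  -- product identity
  have hgm : ∀ ω, g (n + 1) ω = g n ω * p (n + 1) ω := fun ω => by
    rw [hg, hg, Finset.prod_Icc_succ_top (by omega)]
  -- a.e. lower bounds
  have haeP : ∀ᵐ ω ∂P, ∀ s ∈ Finset.Icc 1 (n + 1), ε ≤ p s ω :=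
    (Finset.Icc 1 (n + 1)).eventually_all.2 fun s hs => by
      rw [Finset.mem_Icc] at hs
      exact hppos s hs.1 (by omega)
  have hgbd : ∀ ω, (∀ s ∈ Finset.Icc 1 (n + 1), ε ≤ p s ω) →
      ∀ j, j ≤ n + 1 → ε ^ j ≤ g j ω := by
    intro ω hω j hj
    rw [hg]
    calc ε ^ j = ∏ _s ∈ Finset.Icc 1 j, ε := by
          rw [Finset.prod_const, Nat.card_Icc]; norm_num
    _ ≤ ∏ s ∈ Finset.Icc 1 j, p s ω := by
          refine Finset.prod_le_prod (fun _ _ => hε.le) fun s hs => ?_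
          rw [Finset.mem_Icc] at hs
          exact hω s (Finset.mem_Icc.2 ⟨hs.1, by omega⟩)
  -- the key functions
  set G : Ω → ℝ := fun ω => (g n ω)⁻¹ * F ω with hGdef
  set H : Ω → ℝ := fun ω => (p (n + 1) ω)⁻¹ * G ω with hHdef
  have hgnmeas : Measurable[𝒲 (n + 1)] (g n) := by
    have : g n = fun ω => ∏ s ∈ Finset.Icc 1 n, p s ω := funext fun ω => hg n ω
    rw [this]
    refine Finset.measurable_prod _ fun s hs => ?_
    rw [Finset.mem_Icc] at hs
    exact (hpmeas s hs.1 (by omega)).mono (h𝒲anti (n + 1) hmk s hs.1 (by omega)) le_rfl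
  have hGmeas : Measurable[𝒲 (n + 1)] G := hgnmeas.inv.mul hFmeas
  have hHmeas : Measurable[𝒲 (n + 1)] H := (hpmeas (n + 1) hm1 hmk).inv.mul hGmeas
  set D : ℝ := ε⁻¹ * ((ε ^ n)⁻¹ * C) with hDdef
  have hHbd : ∀ᵐ ω ∂P, ‖H ω‖ ≤ D := by
    filter_upwards [haeP] with ω hω
    have h1 : ε ≤ p (n + 1) ω := hω (n + 1) (Finset.mem_Icc.2 ⟨by omega, le_rfl⟩)
    have h2 : ε ^ n ≤ g n ω := hgbd ω hω n (by omega)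
    have hp0 : 0 < p (n + 1) ω := hε.trans_le h1
    have hg0 : 0 < g n ω := (pow_pos hε n).trans_le h2
    have : ‖H ω‖ = (p (n + 1) ω)⁻¹ * ((g n ω)⁻¹ * |F ω|) := by
      rw [hHdef]
      simp only [hGdef]
      rw [Real.norm_eq_abs, abs_mul, abs_mul, abs_of_pos (inv_pos.2 hp0),
        abs_of_pos (inv_pos.2 hg0)]
    rw [this, hDdef]
    have hCF : 0 ≤ |F ω| := abs_nonneg _
    refine mul_le_mul (inv_anti₀ hε h1)
      (mul_le_mul (inv_anti₀ (pow_pos hε n) h2) (hC ω) hCF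
        (inv_nonneg.2 (pow_pos hε n).le))
      (mul_nonneg (inv_nonneg.2 hg0.le) hCF) (inv_nonneg.2 hε.le)
  -- integrability of the indicator and of H * indicator under μ
  set ind : Ω → ℝ := (B (n + 1)).indicator fun _ => (1 : ℝ) with hinddef
  have hindmeas : Measurable ind := measurable_const.indicator (hBmeas (n + 1) hmk)
  have hind : Integrable ind μ := (integrable_const 1).indicator (hBmeas (n + 1) hmk)
  have hindbd : ∀ ω, ‖ind ω‖ ≤ 1 := by
    intro ω
    by_cases h : ω ∈ B (n + 1) <;>
      simp [hinddef, Set.indicator_of_mem, Set.indicator_of_notMem, h]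
  have hHbdμ : ∀ᵐ ω ∂μ, ‖H ω‖ ≤ D := hHbd.filter_mono hac.ae_le
  -- pull-out property
  have hpull : μ[H * ind|𝒲 (n + 1)] =ᵐ[μ] H * μ[ind|𝒲 (n + 1)] :=
    condExp_stronglyMeasurable_mul_of_bound hm𝒲 hHmeas.stronglyMeasurable hind D hHbdμ
  have hHindint : Integrable (H * ind) μ := by
    refine Integrable.mono' (integrable_const D)
      ((hHmeas.mono hm𝒲 le_rfl).mul hindmeas).aestronglyMeasurable ?_
    filter_upwards [hHbdμ] with ω hω
    have h0D : 0 ≤ ‖H ω‖ := norm_nonneg _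
    calc ‖(H * ind) ω‖ = ‖H ω‖ * ‖ind ω‖ := by rw [Pi.mul_apply, norm_mul]
    _ ≤ D * 1 := mul_le_mul hω (hindbd ω) (norm_nonneg _) (h0D.trans hω)
    _ = D := mul_one D
  -- conversion between set-integral under P and integral under μ
  have hconv : ∀ f : Ω → ℝ, ∫ ω in B n, f ω ∂P = (P (B n)).toReal * ∫ ω, f ω ∂μ := by
    intro f
    rw [hμdef, ProbabilityTheory.cond, integral_smul_measure, ENNReal.toReal_inv,
      smul_eq_mul, ← mul_assoc, mul_inv_cancel₀, one_mul]
    exact ENNReal.toReal_ne_zero.2 ⟨hsP, measure_ne_top _ _⟩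
  -- the main chain
  calc ∫ ω in B (n + 1), (g (n + 1) ω)⁻¹ * F ω ∂P
      = ∫ ω in B n, (H * ind) ω ∂P := by
        have h1 := setIntegral_indicator (μ := P) (s := B n)
          (f := fun ω => (g (n + 1) ω)⁻¹ * F ω) (hBmeas (n + 1) hmk)
        rw [Set.inter_eq_self_of_subset_right hsub] at h1
        rw [← h1]
        refine setIntegral_congr_fun (hBmeas n hnk) fun ω _ => ?_
        by_cases h : ω ∈ B (n + 1)
        · simp only [Set.indicator_of_mem h, Pi.mul_apply, hinddef, hHdef, hGdef,
            Set.indicator_of_mem h, hgm ω, mul_inv]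
          ring
        · simp [hinddef, Set.indicator_of_notMem h]
    _ = (P (B n)).toReal * ∫ ω, (H * ind) ω ∂μ := hconv _
    _ = (P (B n)).toReal * ∫ ω, (μ[H * ind|𝒲 (n + 1)]) ω ∂μ := by
        rw [integral_condExp hm𝒲]
    _ = (P (B n)).toReal * ∫ ω, (H * μ[ind|𝒲 (n + 1)]) ω ∂μ := by
        rw [integral_congr_ae hpull]
    _ = (P (B n)).toReal * ∫ ω, H ω * p (n + 1) ω ∂μ := by
        refine congrArg _ (integral_congr_ae ?_)
        have hv := hpver (n + 1) hm1 hmk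
        simp only [Nat.add_sub_cancel] at hv
        filter_upwards [hv] with ω hω
        rw [Pi.mul_apply]
        exact congrArg (fun x => H ω * x) hω.symm
    _ = (P (B n)).toReal * ∫ ω, G ω ∂μ := by
        refine congrArg _ (integral_congr_ae ?_)
        filter_upwards [(hppos (n + 1) hm1 hmk).filter_mono hac.ae_le] with ω hω
        have hp0 : p (n + 1) ω ≠ 0 := (hε.trans_le hω).ne'
        simp only [hHdef]
        field_simp
    _ = ∫ ω in B n, (g n ω)⁻¹ * F ω ∂P := (hconv _).symm
end
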